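/- arXiv:2012.14479 — 13 statements merged into one kernel-verified Lean document; each statement's English description precedes it below -/
import Mathlib

section
/- A paratopological group G (satisfying the T0 separation axiom) is projectively Ψ if and only if there exist an index type ι, a family (Y_i)_{i∈ι} of Hausdorff paratopological groups each of countable pseudocharacter, and an injective group homomorphism p from G into the product group ∏_{i∈ι} Y_i (with the product topology) that is a topological embedding (i.e., a homeomorphism of G onto its image). -/
/-- A paratopological group (group with jointly continuous multiplication) has
*countable pseudocharacter* if the singleton of its identity is the intersection of
a countable family of open sets. -/
def HasCountablePseudocharacter (H : Type*) [TopologicalSpace H] [One H] : Prop :=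
  ∃ S : Set (Set H), S.Countable ∧ (∀ V ∈ S, IsOpen V) ∧ ⋂₀ S = ({1} : Set H)

/-- Auxiliary predicate: `H` (with the given group and topology structures) is a
Hausdorff paratopological group of countable pseudocharacter and there is a continuous
homomorphism `h : G → H` with `h ⁻¹' {1} ⊆ U`. -/
def IsPsiWitness {G : Type u} [Group G] [TopologicalSpace G] (U : Set G)
    (H : Type u) [Group H] [TopologicalSpace H] : Prop :=
  ContinuousMul H ∧ T2Space H ∧ HasCountablePseudocharacter H ∧
    ∃ h : G →* H, Continuous h ∧ h ⁻¹' ({1} : Set H) ⊆ U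

/-- A paratopological group `G` is *projectively Ψ* if for every neighborhood `U` of the
identity there are a Hausdorff paratopological group `H` of countable pseudocharacter and
a continuous homomorphism `h : G → H` with `h ⁻¹' {1} ⊆ U`. -/
def ProjectivelyPsi (G : Type u) [Group G] [TopologicalSpace G] : Prop :=
  ∀ U ∈ nhds (1 : G), ∃ (H : Type u) (iG : Group H) (iT : TopologicalSpace H),
    @IsPsiWitness G _ _ U H iG iT

/-- Auxiliary predicate: the family `Y i` consists of Hausdorff paratopological groups of
countable pseudocharacter and there is an injective group homomorphism from `G` into the
product `∀ i, Y i` (with the product topology) which is a topological embedding. -/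
def EmbedsInProductOfHausdorffCtblPsChar (G : Type u) [Group G] [TopologicalSpace G]
    (ι : Type u) (Y : ι → Type u) [∀ i, Group (Y i)] [∀ i, TopologicalSpace (Y i)] : Prop :=
  (∀ i, ContinuousMul (Y i)) ∧ (∀ i, T2Space (Y i)) ∧
    (∀ i, HasCountablePseudocharacter (Y i)) ∧
    ∃ p : G →* (∀ i, Y i), Function.Injective p ∧ Topology.IsEmbedding p

/-!
Projective Ψ-ness lets one replace a witness `h : G → H` for a neighbourhood `U₁` of `1` by the
quotient `G ⧸ ker h` with the quotient topology: it is still a Hausdorff paratopological group of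
countable pseudocharacter (it injects continuously into `H`), and now the image of `U₁` is an open
neighbourhood of `1` whose preimage `U₁ * ker h` lies in `U` as soon as `U₁ * U₁ ⊆ U`. The product of
all these quotient maps is therefore inducing at `1`, hence inducing since translations are
homeomorphisms, and injective because `G` is `T₀`. Conversely, a neighbourhood of `1` in a product
contains a finite box around `1`, and the projection onto those finitely many factors is a witness.
-/

open Topology Filter Set Function

namespace HasCountablePseudocharacter

theorem of_injective {X Y : Type*} [TopologicalSpace X] [TopologicalSpace Y] [One X] [One Y]
    {f : X → Y} (hf : Continuous f) (hinj : Injective f) (hf1 : f 1 = 1)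
    (h : HasCountablePseudocharacter Y) : HasCountablePseudocharacter X := by
  obtain ⟨S, hSc, hSo, hS⟩ := h
  refine ⟨preimage f '' S, hSc.image _, forall_mem_image.2 fun V hV => (hSo V hV).preimage hf, ?_⟩
  rw [sInter_image, ← preimage_iInter₂, ← sInter_eq_biInter, hS, ← hf1, ← image_singleton,
    hinj.preimage_image]

theorem pi {ι : Type*} [Countable ι] {Y : ι → Type*} [∀ i, TopologicalSpace (Y i)]
    [∀ i, One (Y i)] (h : ∀ i, HasCountablePseudocharacter (Y i)) :
    HasCountablePseudocharacter (∀ i, Y i) := by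
  choose S hSc hSo hS using h
  refine ⟨⋃ i, preimage (eval i) '' S i, countable_iUnion fun i => (hSc i).image _, ?_, ?_⟩
  · simp only [mem_iUnion, mem_image, forall_exists_index, and_imp]
    rintro _ i V hV rfl
    exact (hSo i V hV).preimage (continuous_apply i)
  · ext y
    simp only [sInter_iUnion, sInter_image, mem_iInter, mem_preimage, eval, ← mem_sInter, hS,
      mem_singleton_iff, funext_iff, Pi.one_apply]

end HasCountablePseudocharacter

section Paratopological

variable {G H : Type*} [Group G] [TopologicalSpace G] [ContinuousMul G]

theorem comap_inv_mul_nhds_one (x : G) : comap (x⁻¹ * ·) (𝓝 1) = 𝓝 x := by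
  simpa [Homeomorph.mulLeft_symm] using (Homeomorph.mulLeft x⁻¹).comap_nhds_eq 1

theorem MonoidHom.isInducing_of_nhds_one_le_comap [Group H] [TopologicalSpace H] [ContinuousMul H]
    (f : G →* H) (hf : Continuous f) (h : comap f (𝓝 1) ≤ 𝓝 (1 : G)) : IsInducing f := by
  refine isInducing_iff_nhds.2 fun x => le_antisymm (hf.tendsto x).le_comap ?_
  calc comap f (𝓝 (f x)) = comap (((f x)⁻¹ * ·) ∘ f) (𝓝 1) := by
        rw [← comap_inv_mul_nhds_one (f x), comap_comap]
    _ = comap (x⁻¹ * ·) (comap f (𝓝 1)) := by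
        rw [comap_comap]; congr 1; ext; simp
    _ ≤ comap (x⁻¹ * ·) (𝓝 1) := comap_mono h
    _ = 𝓝 x := comap_inv_mul_nhds_one x

theorem MonoidHom.isInducing_pi {ι : Type*} {Y : ι → Type*} [∀ i, Group (Y i)]
    [∀ i, TopologicalSpace (Y i)] [∀ i, ContinuousMul (Y i)] (f : ∀ i, G →* Y i)
    (hf : ∀ i, Continuous (f i)) (h : ∀ U ∈ 𝓝 (1 : G), ∃ i, ∃ V ∈ 𝓝 (1 : Y i), f i ⁻¹' V ⊆ U) :
    IsInducing (MonoidHom.pi f) := by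
  refine (MonoidHom.pi f).isInducing_of_nhds_one_le_comap (continuous_pi hf) fun U hU => ?_
  obtain ⟨i, V, hV, hVU⟩ := h U hU
  exact ⟨Function.eval i ⁻¹' V, continuous_apply i |>.continuousAt.preimage_mem_nhds hV, hVU⟩

instance QuotientGroup.instContinuousMul (N : Subgroup G) [N.Normal] : ContinuousMul (G ⧸ N) where
  continuous_mul := by
    rw [← (isOpenQuotientMap_mk.prodMap isOpenQuotientMap_mk).continuous_comp_iff]
    exact continuous_mk.comp continuous_mul

end Paratopological

section QuotientKer

variable {G H : Type*} [Group G] [TopologicalSpace G] [Group H] [TopologicalSpace H] {f : G →* H}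

theorem MonoidHom.continuous_kerLift (hf : Continuous f) : Continuous (QuotientGroup.kerLift f) :=
  (QuotientGroup.isQuotientMap_mk _).continuous_iff.2 hf

theorem MonoidHom.t2Space_quotient_ker [T2Space H] (hf : Continuous f) : T2Space (G ⧸ f.ker) :=
  .of_injective_continuous (QuotientGroup.kerLift_injective f) (f.continuous_kerLift hf)

theorem HasCountablePseudocharacter.quotient_ker (hf : Continuous f)
    (h : HasCountablePseudocharacter H) : HasCountablePseudocharacter (G ⧸ f.ker) :=
  h.of_injective (f.continuous_kerLift hf) (QuotientGroup.kerLift_injective f) (map_one _)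

end QuotientKer

theorem ProjectivelyPsi.exists_embedsInProduct {G : Type u} [Group G] [TopologicalSpace G]
    [ContinuousMul G] [T0Space G] (hG : ProjectivelyPsi G) :
    ∃ (ι : Type u) (Y : ι → Type u) (iG : ∀ i, Group (Y i)) (iT : ∀ i, TopologicalSpace (Y i)),
      @EmbedsInProductOfHausdorffCtblPsChar G _ _ ι Y iG iT := by
  simp only [ProjectivelyPsi, IsPsiWitness] at hG
  choose H iG iT _ _ hH f hf hker using hG
  let N : {U : Set G // U ∈ 𝓝 1} → Subgroup G := fun U => (f U.1 U.2).ker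
  have hp : IsInducing (MonoidHom.pi fun U => QuotientGroup.mk' (N U)) := by
    refine MonoidHom.isInducing_pi _ (fun _ => QuotientGroup.continuous_mk) fun U hU => ?_
    obtain ⟨U₁, hU₁o, hU₁1, hU₁U⟩ := exists_open_nhds_one_mul_subset hU
    refine ⟨⟨U₁, hU₁o.mem_nhds hU₁1⟩, (↑) '' U₁,
      (QuotientGroup.isOpenMap_coe U₁ hU₁o).mem_nhds ⟨1, hU₁1, rfl⟩, ?_⟩
    rw [QuotientGroup.coe_mk', QuotientGroup.preimage_image_mk_eq_mul]
    exact (mul_subset_mul_left (hker U₁ _)).trans hU₁U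
  exact ⟨_, fun U => G ⧸ N U, inferInstance, inferInstance, fun _ => inferInstance,
    fun U => (f U.1 U.2).t2Space_quotient_ker (hf U.1 U.2),
    fun U => (hH U.1 U.2).quotient_ker (hf U.1 U.2), _, hp.injective, hp.isEmbedding⟩

theorem projectivelyPsi_of_isInducing {G ι : Type u} [Group G] [TopologicalSpace G]
    {Y : ι → Type u} [∀ i, Group (Y i)] [∀ i, TopologicalSpace (Y i)] [∀ i, ContinuousMul (Y i)]
    [∀ i, T2Space (Y i)] (hY : ∀ i, HasCountablePseudocharacter (Y i)) {p : G →* ∀ i, Y i}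
    (hp : IsInducing p) : ProjectivelyPsi G := by
  intro U hU
  rw [hp.nhds_eq_comap, map_one, nhds_pi] at hU
  obtain ⟨T, hT, hTU⟩ := hU
  obtain ⟨I, hI, t, ht, hIt⟩ := mem_pi.1 hT
  have := hI.to_subtype
  refine ⟨∀ i : I, Y i, inferInstance, inferInstance, inferInstance, inferInstance,
    .pi fun i => hY i, (MonoidHom.pi fun i : I => Pi.evalMonoidHom Y i).comp p,
    continuous_pi fun i => (continuous_apply (i : ι)).comp hp.continuous, fun g hg => hTU (hIt ?_)⟩
  intro i hi
  rw [show p g i = 1 from congrFun hg ⟨i, hi⟩]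
  exact mem_of_mem_nhds (ht i)

/-- A paratopological group `G` (satisfying the `T₀` separation axiom) is projectively Ψ
if and only if `G` embeds, via an injective continuous group homomorphism that is a
topological embedding, into a product of Hausdorff paratopological groups of countable
pseudocharacter. -/
theorem projectivelyPsi_iff_embeds_in_product (G : Type u) [Group G] [TopologicalSpace G]
    [ContinuousMul G] [T0Space G] :
    ProjectivelyPsi G ↔
      ∃ (ι : Type u) (Y : ι → Type u) (iG : ∀ i, Group (Y i))
        (iT : ∀ i, TopologicalSpace (Y i)),
        @EmbedsInProductOfHausdorffCtblPsChar G _ _ ι Y iG iT := by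
  refine ⟨ProjectivelyPsi.exists_embedsInProduct, ?_⟩
  rintro ⟨ι, Y, iG, iT, _, _, hY, p, -, hp⟩
  exact projectivelyPsi_of_isInducing hY hp.isInducing
end

section
/- Let G be a paratopological group, H a Hausdorff paratopological group of countable pseudocharacter, and h : G → H a continuous group homomorphism with kernel N. Then the quotient group G/N, endowed with the quotient topology, is a Hausdorff paratopological group of countable pseudocharacter, and the induced homomorphism j : G/N → H with h = j ∘ p (p the quotient map) is continuous and injective. -/
/-! The quotient map of a paratopological group is open, so the product of two copies of it is
again a quotient map and multiplication descends. The induced map `G ⧸ ker h → H` is a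
continuous injection, and both the Hausdorff property and countable pseudocharacter pull back
along continuous injections: preimages of open sets cutting out `{1}` in `H` cut out `{1}`. -/

theorem HasCountablePseudocharacter.of_injective_continuous {F X Y : Type*}
    [TopologicalSpace X] [TopologicalSpace Y] [One X] [One Y] [FunLike F X Y] [OneHomClass F X Y]
    {f : F} (hY : HasCountablePseudocharacter Y) (hinj : Function.Injective f)
    (hf : Continuous f) : HasCountablePseudocharacter X := by
  obtain ⟨S, hS, hSopen, hSone⟩ := hY
  refine ⟨Set.preimage f '' S, hS.image _, ?_, ?_⟩
  · rintro _ ⟨V, hV, rfl⟩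
    exact (hSopen V hV).preimage hf
  · rw [Set.sInter_image, ← Set.preimage_sInter, hSone, ← map_one f, ← Set.image_singleton,
      hinj.preimage_image]

namespace QuotientGroup

variable {G : Type*} [Group G] [TopologicalSpace G]

instance instContinuousMul_s2 [ContinuousMul G] (N : Subgroup G) [N.Normal] :
    ContinuousMul (G ⧸ N) where
  continuous_mul := by
    rw [← (isOpenQuotientMap_mk.prodMap isOpenQuotientMap_mk).continuous_comp_iff]
    exact continuous_mk.comp continuous_mul

theorem continuous_kerLift {H : Type*} [Group H] [TopologicalSpace H] {h : G →* H}
    (hc : Continuous h) : Continuous (kerLift h) :=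
  (isQuotientMap_mk h.ker).continuous_iff.mpr hc

end QuotientGroup

theorem quotient_by_ker_hausdorff_ctblPseudocharacter_general {G H : Type*}
    [Group G] [TopologicalSpace G] [ContinuousMul G]
    [Group H] [TopologicalSpace H] [T2Space H]
    (hH : HasCountablePseudocharacter H) (h : G →* H) (hc : Continuous h) :
    ContinuousMul (G ⧸ h.ker) ∧ T2Space (G ⧸ h.ker) ∧
      HasCountablePseudocharacter (G ⧸ h.ker) ∧
      Continuous (QuotientGroup.kerLift h) ∧ Function.Injective (QuotientGroup.kerLift h) ∧
      ∀ x : G, QuotientGroup.kerLift h (QuotientGroup.mk x) = h x := by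
  have hlift : Continuous (QuotientGroup.kerLift h) := QuotientGroup.continuous_kerLift hc
  have hinj : Function.Injective (QuotientGroup.kerLift h) := QuotientGroup.kerLift_injective h
  exact ⟨inferInstance, .of_injective_continuous hinj hlift,
    hH.of_injective_continuous hinj hlift, hlift, hinj, fun _ => rfl⟩

/-- Let `G` be a paratopological group, `H` a Hausdorff paratopological group of countable
pseudocharacter and `h : G → H` a continuous homomorphism with kernel `N`.  Then the
quotient group `G ⧸ N`, endowed with the quotient topology, is a Hausdorff
paratopological group of countable pseudocharacter and the induced homomorphism
`j : G ⧸ N → H` (satisfying `h = j ∘ p` for the quotient map `p`) is continuous and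
injective. -/
theorem quotient_by_ker_hausdorff_ctblPseudocharacter {G H : Type*}
    [Group G] [TopologicalSpace G] [ContinuousMul G]
    [Group H] [TopologicalSpace H] [ContinuousMul H] [T2Space H]
    (hH : HasCountablePseudocharacter H) (h : G →* H) (hc : Continuous h) :
    ContinuousMul (G ⧸ h.ker) ∧ T2Space (G ⧸ h.ker) ∧
      HasCountablePseudocharacter (G ⧸ h.ker) ∧
      Continuous (QuotientGroup.kerLift h) ∧ Function.Injective (QuotientGroup.kerLift h) ∧
      ∀ x : G, QuotientGroup.kerLift h (QuotientGroup.mk x) = h x :=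
  quotient_by_ker_hausdorff_ctblPseudocharacter_general hH h hc
end

section
/- Every ω-balanced paratopological group G whose Hausdorff number is at most ω is projectively Ψ; that is, for every neighborhood U of the identity e of G there exist a Hausdorff paratopological group H of countable pseudocharacter and a continuous homomorphism h : G → H with h⁻¹({e_H}) ⊆ U. -/
/-!
Close `U` under three countable operations on neighbourhoods of `1`: a square root `W * W ⊆ V`,
the countable family of conjugation witnesses given by ω-balancedness, and the countable family
`(Wₙ)` with `⋂ₙ Wₙ Wₙ⁻¹ ⊆ V` given by the Hausdorff number. The resulting countable family `𝒰`
makes `N = {z | z ∈ V ∧ z⁻¹ ∈ V for all V ∈ 𝒰}` a normal subgroup, and in `G ⧸ N` the images of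
the `V ∈ 𝒰` satisfy `⋂ V V⁻¹ = {1}`: if `z ∈ W W⁻¹ N` with `W * W ⊆ Wₙ`, then `z ∈ Wₙ Wₙ⁻¹`.
This one identity makes `G ⧸ N` Hausdorff and of countable pseudocharacter, and `N ⊆ U`.
-/

open Pointwise

/-- A paratopological group `G` is *ω-balanced* if for every neighborhood `U` of the
identity there is a countable family `𝒱` of neighborhoods of the identity such that for
every `x ∈ G` some `V ∈ 𝒱` satisfies `x V x⁻¹ ⊆ U`. -/
def OmegaBalanced (G : Type*) [Group G] [TopologicalSpace G] : Prop :=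
  ∀ U ∈ nhds (1 : G), ∃ 𝒱 : Set (Set G), 𝒱.Countable ∧ (∀ V ∈ 𝒱, V ∈ nhds (1 : G)) ∧
    ∀ x : G, ∃ V ∈ 𝒱, ∀ v ∈ V, x * v * x⁻¹ ∈ U

/-- A paratopological group `G` has *Hausdorff number at most ω* if for every neighborhood
`U` of the identity there is a countable family `(Vₙ)` of neighborhoods of the identity
with `⋂ₙ Vₙ Vₙ⁻¹ ⊆ U`. -/
def HausdorffNumberLeOmega (G : Type*) [Group G] [TopologicalSpace G] : Prop :=
  ∀ U ∈ nhds (1 : G), ∃ V : ℕ → Set G, (∀ n, V n ∈ nhds (1 : G)) ∧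
    (⋂ n, V n * (V n)⁻¹) ⊆ U

open Topology

theorem exists_countable_mem_forall_subset {α : Type*} (f : α → Set α)
    (hf : ∀ a, (f a).Countable) (a : α) :
    ∃ C : Set α, C.Countable ∧ a ∈ C ∧ ∀ x ∈ C, f x ⊆ C := by
  let step : Set α → Set α := fun s => ⋃ x ∈ s, f x
  refine ⟨⋃ n, step^[n] {a}, Set.countable_iUnion fun n => ?_, Set.mem_iUnion.2 ⟨0, rfl⟩, ?_⟩
  · induction n with
    | zero => exact Set.countable_singleton a
    | succ n ih => rw [Function.iterate_succ_apply']; exact ih.biUnion fun x _ => hf x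
  · intro x hx y hy
    obtain ⟨n, hn⟩ := Set.mem_iUnion.1 hx
    refine Set.mem_iUnion.2 ⟨n + 1, ?_⟩
    rw [Function.iterate_succ_apply']
    exact Set.mem_biUnion hn hy

instance QuotientGroup.continuousMul {G : Type*} [Group G] [TopologicalSpace G] [ContinuousMul G]
    (N : Subgroup G) [N.Normal] : ContinuousMul (G ⧸ N) where
  continuous_mul := by
    rw [← (isOpenQuotientMap_mk.prodMap isOpenQuotientMap_mk).continuous_comp_iff]
    exact continuous_mk.comp continuous_mul

section SeparatingFamily

variable {H : Type*} [Group H] [TopologicalSpace H] {ι : Type*} {V : ι → Set H}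

theorem t2Space_of_iInter_mul_inv_subset [ContinuousMul H] (hV : ∀ i, V i ∈ 𝓝 (1 : H))
    (hsep : ⋂ i, V i * (V i)⁻¹ ⊆ {1}) : T2Space H := by
  refine t2Space_iff_disjoint_nhds.2 fun x y hxy => ?_
  obtain ⟨i, hi⟩ : ∃ i, x⁻¹ * y ∉ V i * (V i)⁻¹ := by
    by_contra! h
    exact hxy (inv_mul_eq_one.1 (hsep (Set.mem_iInter.2 h)))
  refine Filter.disjoint_iff.2 ⟨x • V i, smul_mem_nhds_self.2 (hV i), y • V i,
    smul_mem_nhds_self.2 (hV i), Set.disjoint_left.2 ?_⟩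
  rintro _ ⟨a, ha, rfl⟩ ⟨b, hb, hab : y * b = x * a⟩
  refine hi ⟨a, ha, b⁻¹, by simpa using hb, ?_⟩
  calc a * b⁻¹ = x⁻¹ * (x * a) * b⁻¹ := by group
    _ = x⁻¹ * y := by rw [← hab]; group

theorem hasCountablePseudocharacter_of_iInter_mul_inv_subset [Countable ι]
    (hV : ∀ i, V i ∈ 𝓝 (1 : H)) (hsep : ⋂ i, V i * (V i)⁻¹ ⊆ {1}) :
    HasCountablePseudocharacter H := by
  refine ⟨Set.range fun i => interior (V i), Set.countable_range _, ?_, ?_⟩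
  · rintro _ ⟨i, rfl⟩
    exact isOpen_interior
  refine subset_antisymm (fun x hx => hsep (Set.mem_iInter.2 fun i => ?_)) ?_
  · have hxV : x ∈ V i := interior_subset (hx _ ⟨i, rfl⟩)
    have h1V : (1 : H) ∈ (V i)⁻¹ := by simpa using mem_of_mem_nhds (hV i)
    exact Set.subset_mul_left _ h1V hxV
  · rintro _ rfl _ ⟨i, rfl⟩
    exact mem_interior_iff_mem_nhds.2 (hV i)

end SeparatingFamily

section InvariantHausdorffFamily

variable {G : Type*} [Group G]

structure IsInvariantHausdorffFamily (𝒰 : Set (Set G)) : Prop where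
  one_mem : ∀ V ∈ 𝒰, (1 : G) ∈ V
  exists_mul_subset : ∀ V ∈ 𝒰, ∃ W ∈ 𝒰, W * W ⊆ V
  exists_conj_subset : ∀ V ∈ 𝒰, ∀ x : G, ∃ W ∈ 𝒰, ∀ w ∈ W, x * w * x⁻¹ ∈ V
  exists_iInter_mul_inv_subset :
    ∀ V ∈ 𝒰, ∃ W : ℕ → Set G, (∀ n, W n ∈ 𝒰) ∧ ⋂ n, W n * (W n)⁻¹ ⊆ V

namespace IsInvariantHausdorffFamily

variable {𝒰 : Set (Set G)} (h : IsInvariantHausdorffFamily 𝒰)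
include h

theorem mul_mem_of_forall_mem {V : Set G} (hV : V ∈ 𝒰) {a b : G} (ha : ∀ W ∈ 𝒰, a ∈ W)
    (hb : ∀ W ∈ 𝒰, b ∈ W) : a * b ∈ V :=
  let ⟨W, hW, hWV⟩ := h.exists_mul_subset V hV
  hWV (Set.mul_mem_mul (ha W hW) (hb W hW))

def kernel : Subgroup G where
  carrier := {z | ∀ V ∈ 𝒰, z ∈ V ∧ z⁻¹ ∈ V}
  one_mem' V hV := ⟨h.one_mem V hV, by simpa using h.one_mem V hV⟩
  mul_mem' ha hb V hV :=
    ⟨h.mul_mem_of_forall_mem hV (fun W hW => (ha W hW).1) (fun W hW => (hb W hW).1), by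
      simpa using h.mul_mem_of_forall_mem hV (fun W hW => (hb W hW).2) (fun W hW => (ha W hW).2)⟩
  inv_mem' hz V hV := ⟨(hz V hV).2, by simpa using (hz V hV).1⟩

theorem mem_kernel {z : G} : z ∈ h.kernel ↔ ∀ V ∈ 𝒰, z ∈ V ∧ z⁻¹ ∈ V := Iff.rfl

instance kernel_normal : h.kernel.Normal where
  conj_mem z hz g V hV :=
    let ⟨W, hW, hWV⟩ := h.exists_conj_subset V hV g
    ⟨hWV z (hz W hW).1, by simpa [mul_assoc] using hWV z⁻¹ (hz W hW).2⟩

theorem mem_of_mk_mem_mul_inv {z : G}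
    (hz : ∀ V ∈ 𝒰, QuotientGroup.mk' h.kernel z ∈
      QuotientGroup.mk' h.kernel '' V * (QuotientGroup.mk' h.kernel '' V)⁻¹)
    {V : Set G} (hV : V ∈ 𝒰) : z ∈ V := by
  obtain ⟨W, hW, hWV⟩ := h.exists_iInter_mul_inv_subset V hV
  refine hWV (Set.mem_iInter.2 fun n => ?_)
  obtain ⟨W', hW', hW'W⟩ := h.exists_mul_subset (W n) (hW n)
  have hz' := hz W' hW'
  rw [← Set.image_inv, ← Set.image_mul] at hz'
  obtain ⟨_, ⟨a, ha, b, hb, rfl⟩, hab⟩ := hz'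
  -- `z = a * b * m` with `a, b⁻¹, m⁻¹ ∈ W'`, hence `z = a * (m⁻¹ * b⁻¹)⁻¹ ∈ W n * (W n)⁻¹`
  have hm : (a * b)⁻¹ * z ∈ h.kernel := QuotientGroup.eq.1 hab
  have hmb : ((a * b)⁻¹ * z)⁻¹ * b⁻¹ ∈ W n :=
    hW'W (Set.mul_mem_mul ((h.mem_kernel.1 hm W' hW').2) hb)
  have haW : a ∈ W n := hW'W (Set.subset_mul_left W' (h.one_mem W' hW') ha)
  exact ⟨a, haW, _, Set.inv_mem_inv.2 hmb, by group⟩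

theorem iInter_mk_mul_inv_subset :
    ⋂ V : 𝒰, QuotientGroup.mk' h.kernel '' V * (QuotientGroup.mk' h.kernel '' V)⁻¹ ⊆ {1} := by
  intro q hq
  obtain ⟨z, rfl⟩ := QuotientGroup.mk'_surjective h.kernel q
  have hz := fun V (hV : V ∈ 𝒰) => Set.mem_iInter.1 hq ⟨V, hV⟩
  -- the sets `A * A⁻¹` are symmetric, so the hypothesis also holds for `z⁻¹`
  have hz_inv : ∀ V ∈ 𝒰, QuotientGroup.mk' h.kernel z⁻¹ ∈
      QuotientGroup.mk' h.kernel '' V * (QuotientGroup.mk' h.kernel '' V)⁻¹ := fun V hV => by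
    simpa using Set.inv_mem_inv.2 (hz V hV)
  exact (QuotientGroup.eq_one_iff z).2 fun V hV =>
    ⟨h.mem_of_mk_mem_mul_inv hz hV, h.mem_of_mk_mem_mul_inv hz_inv hV⟩

end IsInvariantHausdorffFamily

end InvariantHausdorffFamily

theorem IsInvariantHausdorffFamily.isPsiWitness {G : Type u} [Group G] [TopologicalSpace G]
    [ContinuousMul G] {𝒰 : Set (Set G)} (h : IsInvariantHausdorffFamily 𝒰) (hc : 𝒰.Countable)
    (hn : ∀ V ∈ 𝒰, V ∈ 𝓝 (1 : G)) {U : Set G} (hU : U ∈ 𝒰) :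
    IsPsiWitness U (G ⧸ h.kernel) := by
  have := hc.to_subtype
  have hnq (V : 𝒰) : QuotientGroup.mk' h.kernel '' V ∈ 𝓝 (1 : G ⧸ h.kernel) :=
    QuotientGroup.mk_one (N := h.kernel) ▸ QuotientGroup.isOpenMap_coe.image_mem_nhds (hn V V.2)
  refine ⟨inferInstance, t2Space_of_iInter_mul_inv_subset hnq h.iInter_mk_mul_inv_subset,
    hasCountablePseudocharacter_of_iInter_mul_inv_subset hnq h.iInter_mk_mul_inv_subset,
    QuotientGroup.mk' h.kernel, QuotientGroup.continuous_mk, fun z hz => ?_⟩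
  exact (h.mem_kernel.1 ((QuotientGroup.eq_one_iff z).1 hz) U hU).1

section Construction

variable {G : Type*} [Group G] [TopologicalSpace G] [ContinuousMul G]

theorem exists_countable_nhds_witnesses (hb : OmegaBalanced G) (hs : HausdorffNumberLeOmega G)
    {V : Set G} (hV : V ∈ 𝓝 (1 : G)) :
    ∃ 𝒲 : Set (Set G), 𝒲.Countable ∧ (∀ W ∈ 𝒲, W ∈ 𝓝 (1 : G)) ∧ (∃ W ∈ 𝒲, W * W ⊆ V) ∧
      (∀ x : G, ∃ W ∈ 𝒲, ∀ w ∈ W, x * w * x⁻¹ ∈ V) ∧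
      ∃ W : ℕ → Set G, (∀ n, W n ∈ 𝒲) ∧ ⋂ n, W n * (W n)⁻¹ ⊆ V := by
  obtain ⟨S, hS, hSV⟩ := exists_nhds_one_split hV
  obtain ⟨𝒱, h𝒱c, h𝒱n, h𝒱V⟩ := hb V hV
  obtain ⟨W, hWn, hWV⟩ := hs V hV
  refine ⟨insert S (𝒱 ∪ Set.range W), (h𝒱c.union (Set.countable_range W)).insert S, ?_,
    ⟨S, Set.mem_insert S _, Set.mul_subset_iff.2 hSV⟩, fun x => ?_,
    W, fun n => Or.inr (Or.inr ⟨n, rfl⟩), hWV⟩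
  · rintro _ (rfl | h𝒱 | ⟨n, rfl⟩)
    exacts [hS, h𝒱n _ h𝒱, hWn n]
  · obtain ⟨W', hW', hW'V⟩ := h𝒱V x
    exact ⟨W', Or.inr (Or.inl hW'), hW'V⟩

theorem exists_countable_isInvariantHausdorffFamily (hb : OmegaBalanced G)
    (hs : HausdorffNumberLeOmega G) {U : Set G} (hU : U ∈ 𝓝 (1 : G)) :
    ∃ 𝒰 : Set (Set G), 𝒰.Countable ∧ (∀ V ∈ 𝒰, V ∈ 𝓝 (1 : G)) ∧ U ∈ 𝒰 ∧
      IsInvariantHausdorffFamily 𝒰 := by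
  choose 𝒲 h𝒲c h𝒲n hmul hconj hhaus using
    fun V : {V : Set G // V ∈ 𝓝 (1 : G)} => exists_countable_nhds_witnesses hb hs V.2
  obtain ⟨C, hCc, hUC, hC⟩ := exists_countable_mem_forall_subset
    (fun V => Subtype.val ⁻¹' 𝒲 V) (fun V => (h𝒲c V).preimage Subtype.val_injective) ⟨U, hU⟩
  have h𝒲C {V} (hV : V ∈ C) {W} (hW : W ∈ 𝒲 V) : W ∈ Subtype.val '' C :=
    ⟨⟨W, h𝒲n V W hW⟩, hC V hV hW, rfl⟩
  refine ⟨Subtype.val '' C, hCc.image _, ?_, ⟨_, hUC, rfl⟩, ⟨?_, ?_, ?_, ?_⟩⟩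
  · rintro _ ⟨V, -, rfl⟩
    exact V.2
  · rintro _ ⟨V, -, rfl⟩
    exact mem_of_mem_nhds V.2
  · rintro _ ⟨V, hV, rfl⟩
    obtain ⟨W, hW, hWV⟩ := hmul V
    exact ⟨W, h𝒲C hV hW, hWV⟩
  · rintro _ ⟨V, hV, rfl⟩ x
    obtain ⟨W, hW, hWV⟩ := hconj V x
    exact ⟨W, h𝒲C hV hW, hWV⟩
  · rintro _ ⟨V, hV, rfl⟩
    obtain ⟨W, hW, hWV⟩ := hhaus V
    exact ⟨W, fun n => h𝒲C hV (hW n), hWV⟩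

end Construction

/-- Every ω-balanced paratopological group whose Hausdorff number is at most ω is
projectively Ψ: for every neighborhood `U` of the identity there exist a Hausdorff
paratopological group `H` of countable pseudocharacter and a continuous homomorphism
`h : G → H` with `h ⁻¹' {1} ⊆ U`. -/
theorem omegaBalanced_hausdorffNumberLeOmega_projectivelyPsi (G : Type u) [Group G]
    [TopologicalSpace G] [ContinuousMul G]
    (hb : OmegaBalanced G) (hs : HausdorffNumberLeOmega G) :
    ∀ U ∈ nhds (1 : G), ∃ (H : Type u) (iG : Group H) (iT : TopologicalSpace H),
      @IsPsiWitness G _ _ U H iG iT := by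
  intro U hU
  obtain ⟨𝒰, hc, hn, hU𝒰, h𝒰⟩ := exists_countable_isInvariantHausdorffFamily hb hs hU
  exact ⟨G ⧸ h𝒰.kernel, inferInstance, inferInstance, h𝒰.isPsiWitness hc hn hU𝒰⟩
end

section
/- Let Z be a pseudocompact topological group, Y a Hausdorff paratopological group of countable pseudocharacter, and f : Z → Y a continuous group homomorphism with kernel N. Then N is a closed normal subgroup of Z and the quotient topological group Z/N (with the quotient topology) is a compact metrizable topological group. -/
/-- A topological space is *pseudocompact* if every continuous real-valued function on it
is bounded. -/
def Pseudocompact (X : Type*) [TopologicalSpace X] : Prop :=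
  ∀ f : X → ℝ, Continuous f → ∃ M : ℝ, ∀ x : X, |f x| ≤ M

open Set Filter Topology Function Metric

def FeeblyCompact (X : Type*) [TopologicalSpace X] : Prop :=
  ∀ U : ℕ → Set X, (∀ n, IsOpen (U n)) → (∀ n, (U n).Nonempty) → Antitone U →
    (⋂ n, closure (U n)).Nonempty

section General

variable {X : Type*} [TopologicalSpace X]

theorem HasCountablePseudocharacter.isGδ_singleton_one [One X]
    (hX : HasCountablePseudocharacter X) : IsGδ ({1} : Set X) :=
  let ⟨S, hS, hSo, hSinter⟩ := hX
  ⟨S, hSo, hS, hSinter.symm⟩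

theorem Pseudocompact.of_surjective {Y : Type*} [TopologicalSpace Y] (hX : Pseudocompact X)
    {g : X → Y} (hg : Continuous g) (hsurj : Surjective g) : Pseudocompact Y := by
  intro φ hφ
  obtain ⟨M, hM⟩ := hX (φ ∘ g) (hφ.comp hg)
  exact ⟨M, hsurj.forall.2 hM⟩

theorem Antitone.locallyFinite_of_iInter_closure_eq_empty {U : ℕ → Set X} (hU : Antitone U)
    (h : ⋂ n, closure (U n) = ∅) : LocallyFinite U := by
  intro p
  obtain ⟨n, hn⟩ : ∃ n, p ∉ closure (U n) := by
    simpa using (eq_empty_iff_forall_notMem.1 h) p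
  refine ⟨(closure (U n))ᶜ, isClosed_closure.isOpen_compl.mem_nhds hn,
    (finite_Iio n).subset fun k ⟨z, hzk, hzn⟩ =>
      lt_of_not_ge fun hk => hzn (subset_closure (hU hk hzk))⟩

theorem Pseudocompact.feeblyCompact [CompletelyRegularSpace X] (hX : Pseudocompact X) :
    FeeblyCompact X := by
  intro U hUo hUne hU
  by_contra! hempty
  choose x hx using hUne
  choose g hgc hgx hgU using fun n =>
    CompletelyRegularSpace.completely_regular (x n) (U n)ᶜ (hUo n).isClosed_compl
      (notMem_compl_iff.2 (hx n))
  -- the locally finite sum of the `bump n` is continuous but takes the value `≥ n` at `x n`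
  set bump : ℕ → X → ℝ := fun n z => n * (1 - g n z)
  have hsupp : ∀ n, support (bump n) ⊆ U n := fun n z hz => by
    by_contra hzU
    exact hz (by simp [bump, hgU n hzU])
  have hlf : LocallyFinite fun n => support (bump n) :=
    (hU.locallyFinite_of_iInter_closure_eq_empty hempty).subset hsupp
  have hbump_nonneg : ∀ n z, 0 ≤ bump n z := fun n z =>
    mul_nonneg n.cast_nonneg (sub_nonneg.2 (g n z).2.2)
  obtain ⟨M, hM⟩ := hX _ (continuous_finsum
    (fun n => continuous_const.mul (continuous_const.sub (continuous_subtype_val.comp (hgc n))))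
    hlf)
  obtain ⟨n, hn⟩ := exists_nat_gt M
  have : (n : ℝ) ≤ M := calc
    (n : ℝ) = bump n (x n) := by simp [bump, hgx n]
    _ ≤ ∑ᶠ k, bump k (x n) :=
      single_le_finsum n (hlf.point_finite (x n)) fun k => hbump_nonneg k (x n)
    _ ≤ M := (le_abs_self _).trans (hM (x n))
  linarith

theorem FeeblyCompact.isCountablyGenerated_nhds [RegularSpace X] (hX : FeeblyCompact X)
    {x : X} (hx : IsGδ {x}) : (𝓝 x).IsCountablyGenerated := by
  obtain ⟨U, hUo, hxU⟩ := isGδ_iff_eq_iInter_nat.1 hx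
  have hxU' : ∀ n, x ∈ U n := mem_iInter.1 (hxU ▸ mem_singleton x)
  choose V hV hVU using fun n => (closed_nhds_basis x).mem_iff.1 ((hUo n).mem_nhds (hxU' n))
  set W : ℕ → Set X := fun n => ⋂ k ≤ n, interior (V k)
  have hWo : ∀ n, IsOpen (W n) := fun n =>
    (finite_Iic n).isOpen_biInter fun k _ => isOpen_interior
  have hxW : ∀ n, W n ∈ 𝓝 x := fun n =>
    (biInter_mem (finite_Iic n)).2 fun k _ => interior_mem_nhds.2 (hV k).1
  have hW : Antitone W := fun m n hmn =>
    biInter_subset_biInter_left fun k (hk : k ≤ m) => show k ≤ n from hk.trans hmn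
  refine isCountablyGenerated_of_seq ⟨W, le_antisymm (le_iInf fun n => le_principal_iff.2 (hxW n))
    fun O hO => ?_⟩
  obtain ⟨C, ⟨hCx, hCc⟩, hCO⟩ := (closed_nhds_basis x).mem_iff.1 hO
  suffices ∃ n, W n ⊆ C from
    let ⟨n, hn⟩ := this
    mem_iInf_of_mem n (mem_principal.2 (hn.trans hCO))
  by_contra! hWC
  obtain ⟨p, hp⟩ := hX (fun n => W n \ C) (fun n => (hWo n).sdiff hCc)
    (fun n => sdiff_nonempty.2 (hWC n)) fun m n hmn => sdiff_subset_sdiff_left (hW hmn)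
  have hpx : p = x := by
    refine mem_singleton_iff.1 (hxU ▸ mem_iInter.2 fun n => hVU n ?_)
    refine closure_minimal (fun z hz => ?_) (hV n).2 (mem_iInter.1 hp n)
    exact interior_subset (mem_iInter₂.1 hz.1 n le_rfl)
  -- `p` lies in the closure of `W 0 \ C`, which misses the neighbourhood `C` of `x`
  obtain ⟨y, hyC, -, hyC'⟩ := mem_closure_iff_nhds.1 (mem_iInter.1 hp 0) C (hpx ▸ hCx)
  exact hyC' hyC

end General

theorem FeeblyCompact.exists_mapClusterPt {X : Type*} [PseudoMetricSpace X]
    (hX : FeeblyCompact X) (x : ℕ → X) : ∃ p, MapClusterPt p atTop x := by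
  set U : ℕ → Set X := fun n => ⋃ k ≥ n, ball (x k) (1 / (k + 1))
  have hU : Antitone U := fun m n hmn =>
    biUnion_subset_biUnion_left fun k (hk : n ≤ k) => show m ≤ k from hmn.trans hk
  obtain ⟨p, hp⟩ := hX U (fun n => isOpen_biUnion fun k _ => isOpen_ball)
    (fun n => ⟨x n, mem_iUnion₂.2 ⟨n, le_rfl, mem_ball_self (by positivity)⟩⟩) hU
  refine ⟨p, (nhds_basis_ball.clusterPt_iff (atTop_basis.map x)).2 fun ε hε N _ => ?_⟩
  obtain ⟨m, hm⟩ := exists_nat_one_div_lt (half_pos hε)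
  obtain ⟨q, hq, hpq⟩ := Metric.mem_closure_iff.1 (mem_iInter.1 hp (max m N)) _ (half_pos hε)
  obtain ⟨k, hk, hqk⟩ := mem_iUnion₂.1 hq
  refine ⟨x k, ?_, mem_image_of_mem _ (le_of_max_le_right hk)⟩
  have hkm : 1 / ((k : ℝ) + 1) ≤ 1 / ((m : ℝ) + 1) := by
    gcongr
    exact le_of_max_le_left hk
  calc dist (x k) p ≤ dist q (x k) + dist q p := dist_triangle_left _ _ _
    _ < ε / 2 + ε / 2 :=
      add_lt_add ((mem_ball.1 hqk).trans (hkm.trans_lt hm)) (dist_comm p q ▸ hpq)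
    _ = ε := add_halves ε

theorem FeeblyCompact.compactSpace {X : Type*} [TopologicalSpace X]
    [TopologicalSpace.MetrizableSpace X] (hX : FeeblyCompact X) : CompactSpace X := by
  let := TopologicalSpace.metrizableSpaceMetric X
  rw [compactSpace_iff_seqCompactSpace]
  refine ⟨fun x _ => ?_⟩
  obtain ⟨p, hp⟩ := hX.exists_mapClusterPt x
  obtain ⟨ψ, hψ, hxψ⟩ := hp.tendsto_subseq
  exact ⟨p, mem_univ p, ψ, hψ, hxψ⟩

section TopologicalGroup

open scoped Uniformity

variable (G : Type*) [Group G] [TopologicalSpace G] [IsTopologicalGroup G]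

instance IsTopologicalGroup.completelyRegularSpace : CompletelyRegularSpace G :=
  letI := IsTopologicalGroup.rightUniformSpace G
  inferInstance

theorem IsTopologicalGroup.metrizableSpace_of_isCountablyGenerated_nhds_one [T0Space G]
    [(𝓝 (1 : G)).IsCountablyGenerated] : TopologicalSpace.MetrizableSpace G := by
  let := IsTopologicalGroup.rightUniformSpace G
  have : (𝓤 G).IsCountablyGenerated := by
    rw [uniformity_eq_comap_nhds_one']
    infer_instance
  exact UniformSpace.metrizableSpace

end TopologicalGroup

theorem MonoidHom.isGδ_singleton_one_quotient_ker {G H : Type*} [Group G] [TopologicalSpace G]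
    [Group H] [TopologicalSpace H] (f : G →* H) (hf : Continuous f)
    (h1 : IsGδ ({1} : Set H)) : IsGδ ({1} : Set (G ⧸ f.ker)) := by
  have : QuotientGroup.kerLift f ⁻¹' {1} = {1} := by
    ext q
    simp [map_eq_one_iff _ (QuotientGroup.kerLift_injective f)]
  exact this ▸ h1.preimage (f := QuotientGroup.kerLift f) (continuous_coinduced_dom.2 hf)

theorem quotient_of_pseudocompact_compact_metrizable_general {Z Y : Type*}
    [Group Z] [TopologicalSpace Z] [IsTopologicalGroup Z] (hZ : Pseudocompact Z)
    [Group Y] [TopologicalSpace Y] [T2Space Y]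
    (hY : HasCountablePseudocharacter Y) (f : Z →* Y) (hf : Continuous f) :
    IsClosed (f.ker : Set Z) ∧ f.ker.Normal ∧
      IsTopologicalGroup (Z ⧸ f.ker) ∧ CompactSpace (Z ⧸ f.ker) ∧
      TopologicalSpace.MetrizableSpace (Z ⧸ f.ker) := by
  have hker : IsClosed (f.ker : Set Z) := isClosed_singleton.preimage hf
  have hQ : FeeblyCompact (Z ⧸ f.ker) :=
    (hZ.of_surjective QuotientGroup.continuous_mk QuotientGroup.mk_surjective).feeblyCompact
  have : (𝓝 (1 : Z ⧸ f.ker)).IsCountablyGenerated :=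
    hQ.isCountablyGenerated_nhds (f.isGδ_singleton_one_quotient_ker hf hY.isGδ_singleton_one)
  have := IsTopologicalGroup.metrizableSpace_of_isCountablyGenerated_nhds_one (Z ⧸ f.ker)
  exact ⟨hker, inferInstance, inferInstance, hQ.compactSpace, this⟩

/-- Let `Z` be a pseudocompact topological group, `Y` a Hausdorff paratopological group of
countable pseudocharacter and `f : Z → Y` a continuous homomorphism with kernel `N`.
Then `N` is a closed normal subgroup of `Z` and the quotient topological group `Z ⧸ N`
(with the quotient topology) is a compact metrizable topological group. -/
theorem quotient_of_pseudocompact_compact_metrizable {Z Y : Type*}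
    [Group Z] [TopologicalSpace Z] [IsTopologicalGroup Z] (hZ : Pseudocompact Z)
    [Group Y] [TopologicalSpace Y] [ContinuousMul Y] [T2Space Y]
    (hY : HasCountablePseudocharacter Y) (f : Z →* Y) (hf : Continuous f) :
    IsClosed (f.ker : Set Z) ∧ f.ker.Normal ∧
      IsTopologicalGroup (Z ⧸ f.ker) ∧ CompactSpace (Z ⧸ f.ker) ∧
      TopologicalSpace.MetrizableSpace (Z ⧸ f.ker) :=
  quotient_of_pseudocompact_compact_metrizable_general hZ hY f hf
end

section
/- Let G be a Hausdorff paratopological group and S a subgroup of G whose closure K = cl(S) in G is compact. Then K is a subgroup of G (closed under multiplication and inversion), and K, with the subspace topology, is a compact topological group; in particular, inversion is continuous on K. -/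
/-!
The closure `K` of `S` is a compact submonoid. For `x ∈ K` the closure of `{x, x², …}` is a
compact subsemigroup, so by the Ellis–Numakura lemma it contains an idempotent, which in a group
is `1`; translating by `x⁻¹` puts `x⁻¹` in the closure of `{1, x, x², …} ⊆ K`. Inversion on the
compact Hausdorff group `K` has the closed graph `{(a, b) | a * b = 1}`, and a map into a compact
space with closed graph is continuous.
-/

open Set

theorem continuous_of_isClosed_graph {X Y : Type*} [TopologicalSpace X] [TopologicalSpace Y]
    [CompactSpace Y] {f : X → Y} (hf : IsClosed {p : X × Y | f p.1 = p.2}) : Continuous f := by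
  refine continuous_iff_isClosed.mpr fun C hC ↦ ?_
  have hpre : f ⁻¹' C = Prod.fst '' ({p : X × Y | f p.1 = p.2} ∩ univ ×ˢ C) := by
    ext x
    constructor
    · intro hx
      exact ⟨(x, f x), ⟨rfl, trivial, hx⟩, rfl⟩
    · rintro ⟨⟨x, y⟩, ⟨hxy, -, hy⟩, rfl⟩
      exact (show f x = y from hxy) ▸ hy
  rw [hpre]
  exact isClosedMap_fst_of_compactSpace _ (hf.inter (isClosed_univ.prod hC))

theorem IsTopologicalGroup.of_compactSpace {G : Type*} [Group G] [TopologicalSpace G]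
    [ContinuousMul G] [T2Space G] [CompactSpace G] : IsTopologicalGroup G where
  continuous_inv := continuous_of_isClosed_graph <| by
    simp only [inv_eq_iff_mul_eq_one]
    exact isClosed_eq (continuous_fst.mul continuous_snd) continuous_const

section

variable {G : Type*} [Group G] [TopologicalSpace G] [ContinuousMul G] [T2Space G]

theorem one_mem_closure_range_pow_succ {x : G}
    (hx : IsCompact (closure (range fun n : ℕ ↦ x ^ (n + 1)))) :
    (1 : G) ∈ closure (range fun n : ℕ ↦ x ^ (n + 1)) := by
  let P : Subsemigroup G :=
    { carrier := range fun n : ℕ ↦ x ^ (n + 1)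
      mul_mem' := by
        rintro _ _ ⟨n, rfl⟩ ⟨m, rfl⟩
        exact ⟨n + m + 1, by rw [← pow_add]; ring_nf⟩ }
  obtain ⟨e, he, hee⟩ := exists_idempotent_in_compact_subsemigroup continuous_mul_const
    (closure (P : Set G)) ⟨x, subset_closure ⟨0, pow_one x⟩⟩ hx
    fun _ ha _ hb ↦ P.topologicalClosure.mul_mem ha hb
  rwa [mul_eq_left.mp hee] at he

theorem Submonoid.inv_mem_of_isCompact (M : Submonoid G) (hM : IsCompact (M : Set G)) {x : G}
    (hx : x ∈ M) : x⁻¹ ∈ M := by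
  have hpow_sub : range (fun n : ℕ ↦ x ^ (n + 1)) ⊆ M := by
    rintro _ ⟨n, rfl⟩
    exact pow_mem hx _
  have hone := one_mem_closure_range_pow_succ <|
    hM.of_isClosed_subset isClosed_closure (closure_minimal hpow_sub hM.isClosed)
  have hinv := image_closure_subset_closure_image (continuous_const_mul x⁻¹) ⟨1, hone, mul_one _⟩
  refine closure_minimal ?_ hM.isClosed hinv
  rintro _ ⟨_, ⟨n, rfl⟩, rfl⟩
  simpa only [pow_succ', inv_mul_cancel_left, SetLike.mem_coe] using pow_mem hx n

end

/-- Let `G` be a Hausdorff paratopological group (a group with a Hausdorff topology making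
multiplication jointly continuous) and `S` a subgroup of `G` whose closure `K` in `G` is
compact.  Then `K` is a subgroup of `G` (i.e. it is closed under multiplication and
inversion) and `K`, with the subspace topology, is a compact topological group; in
particular inversion is continuous on `K`. -/
theorem closure_of_subgroup_compact_is_topological_group {G : Type*}
    [Group G] [TopologicalSpace G] [ContinuousMul G] [T2Space G]
    (S : Subgroup G) (hK : IsCompact (closure (S : Set G))) :
    ∃ K : Subgroup G, (K : Set G) = closure (S : Set G) ∧
      CompactSpace K ∧ IsTopologicalGroup K := by
  let M := S.toSubmonoid.topologicalClosure
  let K : Subgroup G := { M with inv_mem' := M.inv_mem_of_isCompact hK }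
  have : CompactSpace K := isCompact_iff_compactSpace.mp hK
  have : ContinuousMul K := K.toSubmonoid.continuousMul
  exact ⟨K, rfl, inferInstance, .of_compactSpace⟩
end

section
/- Let K be a compact topological group, G a Hausdorff paratopological group, and f : K → G a continuous group homomorphism. Then the image f[K] is a closed compact subset of G, and f[K], with the subspace topology, is a compact topological group (in particular, inversion is continuous on f[K]). -/
/-! A continuous map from a compact space to a Hausdorff space is closed, so `f` corestricted to
its range is a quotient map.  Inversion on the range is then continuous because, composed with
this quotient map, it is the continuous map `k ↦ f k⁻¹`. -/

open Topology

theorem Topology.IsQuotientMap.continuousInv_of_monoidHom {K H : Type*} [Group K] [Group H]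
    [TopologicalSpace K] [TopologicalSpace H] [ContinuousInv K] {f : K →* H}
    (hf : IsQuotientMap f) : ContinuousInv H where
  continuous_inv := hf.continuous_iff.2 <| by
    simpa only [Function.comp_def, map_inv] using hf.continuous.comp continuous_inv

theorem MonoidHom.isQuotientMap_rangeRestrict_of_compactSpace {K G : Type*} [Group K]
    [TopologicalSpace K] [CompactSpace K] [Group G] [TopologicalSpace G] [T2Space G]
    {f : K →* G} (hf : Continuous f) : IsQuotientMap f.rangeRestrict :=
  have hcont : Continuous f.rangeRestrict := hf.subtype_mk _
  hcont.isClosedMap.isQuotientMap hcont f.rangeRestrict_surjective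

/-- Let `K` be a compact topological group, `G` a Hausdorff paratopological group (a group
with a Hausdorff topology making multiplication jointly continuous) and `f : K → G` a
continuous homomorphism.  Then the image `f[K]` is a closed compact subset of `G` and
`f[K]`, with the subspace topology, is a compact topological group (in particular,
inversion is continuous on `f[K]`). -/
theorem image_of_compact_group_is_closed_topological_group {K G : Type*}
    [Group K] [TopologicalSpace K] [IsTopologicalGroup K] [CompactSpace K]
    [Group G] [TopologicalSpace G] [ContinuousMul G] [T2Space G]
    (f : K →* G) (hf : Continuous f) :
    IsClosed (Set.range f) ∧ IsCompact (Set.range f) ∧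
      CompactSpace f.range ∧ IsTopologicalGroup f.range := by
  have hcompact : IsCompact (Set.range f) := isCompact_range hf
  have hquot := MonoidHom.isQuotientMap_rangeRestrict_of_compactSpace hf
  have : ContinuousMul f.range := f.range.toSubmonoid.continuousMul
  have : ContinuousInv f.range := hquot.continuousInv_of_monoidHom
  exact ⟨hcompact.isClosed, hcompact,
    f.rangeRestrict_surjective.compactSpace hquot.continuous, IsTopologicalGroup.mk⟩
end

section
/- Let (G, τ) be a paratopological group and let τ^♯ be the smallest topology on G containing τ together with the sets U⁻¹ = {x⁻¹ : x ∈ U} for all τ-open sets U (equivalently, the join of τ and the pullback of τ under inversion). Then (G, τ^♯) is a topological group, the sets U ∩ U⁻¹, where U ranges over τ-neighborhoods of the identity, form a neighborhood base at the identity for τ^♯, and if τ satisfies the T0 separation axiom then τ^♯ is Hausdorff. -/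
/-!
Write `τ♯ = τ ⊓ τ⁻¹`, where `τ⁻¹` is the pullback of `τ` under inversion. Inversion swaps `τ` and
`τ⁻¹`, so `τ♯` is invariant under it; multiplication is continuous for `τ⁻¹` because `x ↦ x⁻¹` is
an isomorphism onto the opposite group, hence for `τ♯`. The `τ♯`-neighbourhoods of `1` are the
sets containing some `U ∩ V⁻¹` with `U, V` `τ`-neighbourhoods of `1`, and `U ∩ V` may replace both.
Finally `τ♯` is finer than `τ`, hence `T₀` when `τ` is, and a `T₀` topological group is Hausdorff.
-/

open Pointwise Topology Filter TopologicalSpace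

theorem Filter.hasBasis_inf_inv {α : Type*} [InvolutiveInv α] (l : Filter α) :
    (l ⊓ l⁻¹).HasBasis (· ∈ l) (fun U => U ∩ U⁻¹) := by
  refine (l.basis_sets.inf l.basis_sets.inv).to_hasBasis ?_ ?_
  · rintro ⟨U, V⟩ ⟨hU, hV⟩
    exact ⟨U ∩ V, inter_mem hU hV, Set.inter_subset_inter Set.inter_subset_left
      (Set.inv_subset_inv.mpr Set.inter_subset_right)⟩
  · exact fun U hU => ⟨(U, U), ⟨hU, hU⟩, subset_rfl⟩

section

variable {G : Type*} [Group G] (τ : TopologicalSpace G)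

theorem continuousMul_induced_inv (hτ : @ContinuousMul G τ _) :
    @ContinuousMul G (induced (·⁻¹) τ) _ := by
  have := continuousMul_induced (N := Gᵐᵒᵖ) (MulEquiv.inv' G)
  rwa [MulOpposite.instTopologicalSpaceMulOpposite, induced_compose] at this

theorem induced_inv_inf_induced_inv :
    induced (·⁻¹) (τ ⊓ induced (·⁻¹) τ) = τ ⊓ induced (·⁻¹) τ := by
  rw [induced_inf, induced_compose, inv_involutive.comp_self, induced_id, inf_comm]

theorem continuousInv_inf_induced_inv : @ContinuousInv G (τ ⊓ induced (·⁻¹) τ) _ :=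
  @ContinuousInv.mk G (τ ⊓ induced (·⁻¹) τ) _
    (continuous_iff_le_induced.mpr (induced_inv_inf_induced_inv τ).ge)

theorem isTopologicalGroup_inf_induced_inv (hτ : @ContinuousMul G τ _) :
    @IsTopologicalGroup G (τ ⊓ induced (·⁻¹) τ) _ :=
  @IsTopologicalGroup.mk G (τ ⊓ induced (·⁻¹) τ) _
    (continuousMul_inf hτ (continuousMul_induced_inv τ hτ)) (continuousInv_inf_induced_inv τ)

theorem nhds_one_inf_induced_inv :
    @nhds G (τ ⊓ induced (·⁻¹) τ) 1 = @nhds G τ 1 ⊓ (@nhds G τ 1)⁻¹ := by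
  rw [nhds_inf, nhds_induced, inv_one, Filter.comap_inv]

end

/-- Let `(G, τ)` be a paratopological group and let `τ♯` be the smallest topology on `G`
containing `τ` together with the inverses `U⁻¹` of all `τ`-open sets `U` (i.e. the join of
`τ` and the pullback of `τ` under inversion; recall that in Mathlib's order on topologies
the topology generated by the union of two topologies is their infimum `⊓`).
Then `(G, τ♯)` is a topological group, the sets `U ∩ U⁻¹` with `U` a `τ`-neighborhood of
the identity form a neighborhood base at the identity for `τ♯`, and if `τ` is `T₀` then
`τ♯` is Hausdorff. -/
theorem group_coreflection_topological_group {G : Type*} [Group G]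
    (τ : TopologicalSpace G) (hτ : @ContinuousMul G τ _)
    (sharp : TopologicalSpace G)
    (hsharp : sharp = τ ⊓ TopologicalSpace.induced (fun x : G => x⁻¹) τ) :
    @IsTopologicalGroup G sharp _ ∧
      (@nhds G sharp 1).HasBasis (fun U : Set G => U ∈ @nhds G τ 1)
        (fun U : Set G => U ∩ U⁻¹) ∧
      (@T0Space G τ → @T2Space G sharp) := by
  subst hsharp
  have hgroup := isTopologicalGroup_inf_induced_inv τ hτ
  refine ⟨hgroup, ?_, fun hτ₀ => ?_⟩
  · rw [nhds_one_inf_induced_inv]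
    exact (@nhds G τ 1).hasBasis_inf_inv
  · have hsharp₀ : @T0Space G (τ ⊓ induced (·⁻¹) τ) :=
      @t0Space_of_injective_of_continuous G G (τ ⊓ induced (·⁻¹) τ) τ id Function.injective_id
        (continuous_id_of_le inf_le_left) hτ₀
    infer_instance
end

section
/- Let ι be an index set of cardinality ℵ₁, let Σ be the subgroup of countably supported elements of 𝕋^ι, and let c ∈ 𝕋^ι be an element of infinite order such that the cyclic subgroup generated by c meets Σ only in the identity. Then there exists a topology τ on the group G = Σ × ℤ such that: (i) multiplication on G is jointly continuous with respect to τ; (ii) τ is Hausdorff; and (iii) for every g ∈ G the family of translates g·O_U, where U ranges over the open neighborhoods of the identity in 𝕋^ι, is a neighborhood basis at g for τ. -/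
/-!
The map `(s, k) ↦ c⁻ᵏ s` is a group homomorphism `Σ × ℤ → 𝕋^ι`. It is injective because `c` has
infinite order and `⟨c⟩ ∩ Σ = 1`, and `O_U` is exactly the part of the preimage of `U` lying over
`k ≥ 0`. The sets `O_U` therefore form a filter `F` at `1` with `F · F ≤ F`, and the translates of
`F` are the neighbourhood filters of a topology on the commutative group `Σ × ℤ` for which
multiplication is continuous. The homomorphism is continuous for this topology and injective into
the Hausdorff group `𝕋^ι`, so the topology is Hausdorff.
-/


/-- The subgroup `Σ` of countably supported elements of the product group `𝕋^ι`,
where `𝕋 = Circle` is the circle group. -/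
noncomputable def SigmaSubgroup (ι : Type*) : Subgroup (ι → Circle) where
  carrier := {x | {i | x i ≠ 1}.Countable}
  one_mem' := by simp
  mul_mem' := by
    intro a b ha hb
    refine (ha.union hb).mono ?_
    intro i hi
    by_contra h
    simp only [Set.mem_union, Set.mem_setOf_eq, not_or, not_not] at h
    exact hi (by simp [Pi.mul_apply, h.1, h.2])
  inv_mem' := by
    intro a ha
    refine ha.mono ?_
    intro i hi
    simp only [Set.mem_setOf_eq, Pi.inv_apply, ne_eq, inv_eq_one] at hi ⊢
    exact hi

/-- For `c ∈ 𝕋^ι` and `U ⊆ 𝕋^ι`, the set `O_U = ⋃_{n ∈ ℕ} ((cⁿU ∩ Σ) × {n})`, regarded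
as a subset of the group `G = Σ × ℤ` (we use `Multiplicative ℤ` so that `G` is a
multiplicative group; `ℕ` is identified with `{0, 1, 2, …} ⊆ ℤ`). -/
def OSet {ι : Type*} (c : ι → Circle) (U : Set (ι → Circle)) :
    Set (↥(SigmaSubgroup ι) × Multiplicative ℤ) :=
  {p | ∃ n : ℕ, p.2 = Multiplicative.ofAdd (n : ℤ) ∧
    ∃ u ∈ U, (p.1 : ι → Circle) = c ^ n * u}


open Filter Topology

section OfNhdsOne

variable {G : Type*} [Monoid G] (F : Filter G)

abbrev TopologicalSpace.ofNhdsOne : TopologicalSpace G :=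
  TopologicalSpace.mkOfNhds fun g => map (g * ·) F

variable {F}

theorem TopologicalSpace.nhds_ofNhdsOne (hF₁ : pure 1 ≤ F)
    (hF₂ : Tendsto (fun p : G × G => p.1 * p.2) (F ×ˢ F) F) (g : G) :
    @nhds G (ofNhdsOne F) g = map (g * ·) F := by
  refine TopologicalSpace.nhds_mkOfNhds _ g (fun a => ?_) fun a s hs => ?_
  · simpa using map_mono (m := (a * ·)) hF₁
  · rw [eventually_map]
    filter_upwards [(hF₂.eventually hs).curry] with x hx
    simp only [mem_map, Set.preimage, mul_assoc]
    exact hx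

theorem TopologicalSpace.continuous_ofNhdsOne {K : Type*} [TopologicalSpace K] [Monoid K]
    [ContinuousMul K] (hF₁ : pure 1 ≤ F)
    (hF₂ : Tendsto (fun p : G × G => p.1 * p.2) (F ×ˢ F) F) {f : G →* K}
    (hf : Tendsto f F (𝓝 1)) : @Continuous G K (ofNhdsOne F) _ f := by
  let := ofNhdsOne F
  refine continuous_iff_continuousAt.2 fun g => ?_
  rw [ContinuousAt, nhds_ofNhdsOne hF₁ hF₂, tendsto_map'_iff]
  simpa [Function.comp_def] using (tendsto_const_nhds (x := f g)).mul hf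

end OfNhdsOne

theorem TopologicalSpace.continuousMul_ofNhdsOne {G : Type*} [CommMonoid G] {F : Filter G}
    (hF₁ : pure 1 ≤ F) (hF₂ : Tendsto (fun p : G × G => p.1 * p.2) (F ×ˢ F) F) :
    @ContinuousMul G (ofNhdsOne F) _ := by
  let := ofNhdsOne F
  refine ⟨continuous_iff_continuousAt.2 fun ⟨a, b⟩ => ?_⟩
  rw [ContinuousAt, nhds_prod_eq, nhds_ofNhdsOne hF₁ hF₂, nhds_ofNhdsOne hF₁ hF₂,
    nhds_ofNhdsOne hF₁ hF₂, prod_map_map_eq, tendsto_map'_iff]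
  convert (tendsto_map (f := ((a * b) * ·))).comp hF₂ using 2
  ext p
  exact mul_mul_mul_comm a p.1 b p.2

section Untwist

variable {K : Type*} [CommGroup K] (H : Subgroup K) (c : K)

def untwistHom : H × Multiplicative ℤ →* K :=
  H.subtype.coprod (zpowersHom K c⁻¹)

@[simp]
theorem untwistHom_apply (p : H × Multiplicative ℤ) :
    untwistHom H c p = p.1 * c ^ (-p.2.toAdd) := by
  simp [untwistHom, zpow_neg]

theorem untwistHom_injective (hc : ¬IsOfFinOrder c) (hH : Subgroup.zpowers c ⊓ H = ⊥) :
    Function.Injective (untwistHom H c) := by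
  refine (injective_iff_map_eq_one _).2 fun ⟨h, k⟩ hp => ?_
  have hh : (h : K) = c ^ k.toAdd := by simpa [mul_inv_eq_one, zpow_neg] using hp
  have hck : c ^ k.toAdd = 1 := by
    rw [← Subgroup.mem_bot, ← hH]
    exact ⟨Subgroup.zpow_mem_zpowers c _, hh ▸ h.2⟩
  have hk : k = 1 := by
    simpa using injective_zpow_iff_not_isOfFinOrder.2 hc (hck.trans (zpow_zero c).symm)
  simp_all

variable [TopologicalSpace K]

def twistedNhdsOne : Filter (H × Multiplicative ℤ) :=
  comap (untwistHom H c) (𝓝 1) ⊓ 𝓟 {p | 0 ≤ p.2.toAdd}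

theorem tendsto_untwistHom_twistedNhdsOne :
    Tendsto (untwistHom H c) (twistedNhdsOne H c) (𝓝 1) :=
  tendsto_comap.mono_left inf_le_left

theorem pure_one_le_twistedNhdsOne : pure 1 ≤ twistedNhdsOne H c :=
  le_inf (tendsto_pure_left.2 fun _ hs => by simpa using mem_of_mem_nhds hs).le_comap
    (by simp)

theorem tendsto_mul_twistedNhdsOne [ContinuousMul K] :
    Tendsto (fun p : (H × Multiplicative ℤ) × (H × Multiplicative ℤ) => p.1 * p.2)
      (twistedNhdsOne H c ×ˢ twistedNhdsOne H c) (twistedNhdsOne H c) := by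
  refine tendsto_inf.2 ⟨tendsto_comap_iff.2 ?_, tendsto_principal.2 ?_⟩
  · simpa only [Function.comp_def, map_mul, mul_one] using
      ((tendsto_untwistHom_twistedNhdsOne H c).comp tendsto_fst).mul
        ((tendsto_untwistHom_twistedNhdsOne H c).comp tendsto_snd)
  · filter_upwards [tendsto_fst.eventually (mem_inf_of_right (mem_principal_self _)),
      tendsto_snd.eventually (mem_inf_of_right (mem_principal_self _))] with p hp₁ hp₂
    simpa using add_nonneg hp₁ hp₂

end Untwist

theorem OSet_eq_preimage_inter {ι : Type*} (c : ι → Circle) (U : Set (ι → Circle)) :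
    OSet c U = untwistHom (SigmaSubgroup ι) c ⁻¹' U ∩ {p | 0 ≤ p.2.toAdd} := by
  ext ⟨s, k⟩
  constructor
  · rintro ⟨n, rfl, u, hu, hs : (s : ι → Circle) = c ^ n * u⟩
    exact ⟨by simpa [hs] using hu, by simp⟩
  · rintro ⟨hu, hk⟩
    obtain ⟨n, hn⟩ := Int.eq_ofNat_of_zero_le hk
    refine ⟨n, by simp [← hn], _, hu, ?_⟩
    simp [hn]

theorem hasBasis_twistedNhdsOne {ι : Type*} (c : ι → Circle) :
    (twistedNhdsOne (SigmaSubgroup ι) c).HasBasis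
      (fun U : Set (ι → Circle) => IsOpen U ∧ (1 : ι → Circle) ∈ U) (OSet c) := by
  have h := ((nhds_basis_opens (1 : ι → Circle)).comap
    (untwistHom (SigmaSubgroup ι) c)).inf_principal {p | 0 ≤ p.2.toAdd}
  simp only [← OSet_eq_preimage_inter, and_comm] at h
  exact h

theorem exists_hausdorff_paratopological_topology_on_sigma_times_int_general
    (ι : Type u)
    (c : ι → Circle) (hc : ¬ IsOfFinOrder c)
    (hcSigma : Subgroup.zpowers c ⊓ SigmaSubgroup ι = ⊥) :
    ∃ τ : TopologicalSpace (↥(SigmaSubgroup ι) × Multiplicative ℤ),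
      @ContinuousMul _ τ _ ∧ @T2Space _ τ ∧
      ∀ g : ↥(SigmaSubgroup ι) × Multiplicative ℤ,
        (@nhds _ τ g).HasBasis
          (fun U : Set (ι → Circle) => IsOpen U ∧ (1 : ι → Circle) ∈ U)
          (fun U : Set (ι → Circle) => (fun p => g * p) '' OSet c U) := by
  have h₁ := pure_one_le_twistedNhdsOne (SigmaSubgroup ι) c
  have h₂ := tendsto_mul_twistedNhdsOne (SigmaSubgroup ι) c
  let := TopologicalSpace.ofNhdsOne (twistedNhdsOne (SigmaSubgroup ι) c)
  refine ⟨_, TopologicalSpace.continuousMul_ofNhdsOne h₁ h₂,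
    T2Space.of_injective_continuous (untwistHom_injective _ c hc hcSigma)
      (TopologicalSpace.continuous_ofNhdsOne h₁ h₂ (tendsto_untwistHom_twistedNhdsOne _ c)),
    fun g => ?_⟩
  rw [TopologicalSpace.nhds_ofNhdsOne h₁ h₂]
  exact (hasBasis_twistedNhdsOne c).map _

/-- Let `ι` have cardinality `ℵ₁`, let `Σ ≤ 𝕋^ι` be the subgroup of countably supported
elements and let `c ∈ 𝕋^ι` have infinite order with `⟨c⟩ ∩ Σ = {1}`.  Then there is a
topology `τ` on `G = Σ × ℤ` such that multiplication on `G` is jointly continuous, `τ` is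
Hausdorff, and for every `g ∈ G` the translates `g · O_U`, with `U` ranging over the open
neighborhoods of the identity of `𝕋^ι`, form a neighborhood basis at `g` for `τ`. -/
theorem exists_hausdorff_paratopological_topology_on_sigma_times_int
    (ι : Type u) (hι : Cardinal.mk ι = Cardinal.aleph 1)
    (c : ι → Circle) (hc : ¬ IsOfFinOrder c)
    (hcSigma : Subgroup.zpowers c ⊓ SigmaSubgroup ι = ⊥) :
    ∃ τ : TopologicalSpace (↥(SigmaSubgroup ι) × Multiplicative ℤ),
      @ContinuousMul _ τ _ ∧ @T2Space _ τ ∧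
      ∀ g : ↥(SigmaSubgroup ι) × Multiplicative ℤ,
        (@nhds _ τ g).HasBasis
          (fun U : Set (ι → Circle) => IsOpen U ∧ (1 : ι → Circle) ∈ U)
          (fun U : Set (ι → Circle) => (fun p => g * p) '' OSet c U) :=
  exists_hausdorff_paratopological_topology_on_sigma_times_int_general ι c hc hcSigma
end

section
/- Let ι be an index set of cardinality ℵ₁, let Σ be the subgroup of countably supported elements of 𝕋^ι, and let c ∈ 𝕋^ι be an element of infinite order such that the cyclic subgroup generated by c meets Σ only in the identity. Suppose τ is a topology on G = Σ × ℤ making multiplication jointly continuous such that for every g ∈ G the translates g·O_U, for U an open neighborhood of the identity in 𝕋^ι, form a neighborhood basis at g. Then the τ-closure of the subgroup H = Σ × {0} equals Σ × {n ∈ ℤ : n ≤ 0}; in particular, the closure of H in (G, τ) is not a subgroup of G. -/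
/-!
Every basic neighbourhood `p · O_U` of `p` lies in `Σ × {n ≥ p₂}`, so only points with
`p₂ ≤ 0` can be adherent to `Σ × {0}`. Conversely, `Σ` is dense in `𝕋^ι`, so `cⁿU` meets `Σ`
for every `n`, and `p · O_U` reaches the level `0` by taking `n = -p₂`. The closure
`Σ × {n ≤ 0}` is not closed under inversion.
-/

open Set

theorem SigmaSubgroup.dense (ι : Type*) : Dense (SigmaSubgroup ι : Set (ι → Circle)) := by
  classical
  refine dense_iff_inter_open.mpr fun U hU ⟨x, hx⟩ => ?_
  obtain ⟨I, V, hV, hsub⟩ := isOpen_pi_iff.mp hU x hx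
  refine ⟨fun i => if i ∈ I then x i else 1, hsub fun i hi => ?_, ?_⟩
  · simpa [show i ∈ I from hi] using (hV i hi).2
  · refine I.countable_toSet.mono fun i hi => ?_
    by_contra hiI
    exact hi (if_neg hiI)

theorem SigmaSubgroup.exists_mem_mul_mem {ι : Type*} (x : ι → Circle) {U : Set (ι → Circle)}
    (hU : IsOpen U) (h1 : (1 : ι → Circle) ∈ U) : ∃ u ∈ U, x * u ∈ SigmaSubgroup ι := by
  obtain ⟨w, hw_mem, hwU⟩ := (SigmaSubgroup.dense ι).exists_mem_open
    (hU.preimage (continuous_const_mul x⁻¹)) ⟨x, by simpa using h1⟩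
  exact ⟨x⁻¹ * w, hwU, by simpa using hw_mem⟩

section OSet

variable {ι : Type*} {c : ι → Circle} {U : Set (ι → Circle)}

theorem toAdd_snd_nonneg_of_mem_OSet {q : ↥(SigmaSubgroup ι) × Multiplicative ℤ}
    (hq : q ∈ OSet c U) : 0 ≤ Multiplicative.toAdd q.2 := by
  obtain ⟨n, hn, -⟩ := hq
  simp [hn]

theorem exists_mem_OSet_snd_eq (hU : IsOpen U) (h1 : (1 : ι → Circle) ∈ U) (n : ℕ) :
    ∃ q ∈ OSet c U, q.2 = Multiplicative.ofAdd (n : ℤ) := by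
  obtain ⟨u, huU, hmem⟩ := SigmaSubgroup.exists_mem_mul_mem (c ^ n) hU h1
  exact ⟨(⟨c ^ n * u, hmem⟩, Multiplicative.ofAdd (n : ℤ)), ⟨n, rfl, u, huU, rfl⟩, rfl⟩

theorem closure_snd_eq_one_of_hasBasis_OSet
    [TopologicalSpace (↥(SigmaSubgroup ι) × Multiplicative ℤ)]
    (hbasis : ∀ g : ↥(SigmaSubgroup ι) × Multiplicative ℤ,
      (nhds g).HasBasis (fun U : Set (ι → Circle) => IsOpen U ∧ (1 : ι → Circle) ∈ U)
        (fun U => (fun p => g * p) '' OSet c U)) :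
    closure {p : ↥(SigmaSubgroup ι) × Multiplicative ℤ | p.2 = 1} =
      {p | Multiplicative.toAdd p.2 ≤ 0} := by
  ext p
  simp only [mem_closure_iff_nhds_basis' (hbasis p), image_inter_nonempty_iff]
  simp only [Set.Nonempty, mem_inter_iff, mem_preimage, mem_ofPred_eq, Prod.snd_mul]
  constructor
  · intro h
    obtain ⟨q, hq, hpq⟩ := h univ ⟨isOpen_univ, mem_univ _⟩
    have hsum : Multiplicative.toAdd p.2 + Multiplicative.toAdd q.2 = 0 := by
      simpa using congrArg Multiplicative.toAdd hpq
    linarith [toAdd_snd_nonneg_of_mem_OSet hq]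
  · rintro hp U ⟨hU, h1⟩
    obtain ⟨q, hq, hq2⟩ :=
      exists_mem_OSet_snd_eq (c := c) hU h1 (-Multiplicative.toAdd p.2).toNat
    refine ⟨q, hq, ?_⟩
    rw [hq2, Int.toNat_of_nonneg (by omega)]
    exact mul_inv_cancel p.2

end OSet

theorem not_exists_subgroup_coe_eq_toAdd_snd_nonpos (G : Type*) [Group G] :
    ¬ ∃ K : Subgroup (G × Multiplicative ℤ),
      (K : Set (G × Multiplicative ℤ)) = {p | Multiplicative.toAdd p.2 ≤ 0} := by
  rintro ⟨K, hK⟩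
  have hmem : ((1 : G), Multiplicative.ofAdd (-1 : ℤ)) ∈ K := by
    rw [← SetLike.mem_coe, hK]
    simp
  have hinv := K.inv_mem hmem
  rw [← SetLike.mem_coe, hK] at hinv
  simp at hinv

theorem closure_of_sigma_times_zero_general
    (ι : Type u)
    (c : ι → Circle)
    (τ : TopologicalSpace (↥(SigmaSubgroup ι) × Multiplicative ℤ))
    (hbasis : ∀ g : ↥(SigmaSubgroup ι) × Multiplicative ℤ,
      (@nhds _ τ g).HasBasis
        (fun U : Set (ι → Circle) => IsOpen U ∧ (1 : ι → Circle) ∈ U)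
        (fun U : Set (ι → Circle) => (fun p => g * p) '' OSet c U)) :
    @closure _ τ {p : ↥(SigmaSubgroup ι) × Multiplicative ℤ | p.2 = 1} =
        {p : ↥(SigmaSubgroup ι) × Multiplicative ℤ | Multiplicative.toAdd p.2 ≤ 0} ∧
      ¬ ∃ K : Subgroup (↥(SigmaSubgroup ι) × Multiplicative ℤ),
        (K : Set (↥(SigmaSubgroup ι) × Multiplicative ℤ)) =
          @closure _ τ {p : ↥(SigmaSubgroup ι) × Multiplicative ℤ | p.2 = 1} := by
  have hclosure := @closure_snd_eq_one_of_hasBasis_OSet ι c τ hbasis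
  exact ⟨hclosure, hclosure ▸ not_exists_subgroup_coe_eq_toAdd_snd_nonpos _⟩

/-- Let `ι` have cardinality `ℵ₁`, let `Σ ≤ 𝕋^ι` be the subgroup of countably supported
elements and let `c ∈ 𝕋^ι` have infinite order with `⟨c⟩ ∩ Σ = {1}`.  If `τ` is a topology
on `G = Σ × ℤ` making multiplication jointly continuous such that for every `g ∈ G` the
translates `g · O_U`, with `U` an open neighborhood of the identity of `𝕋^ι`, form a
neighborhood basis at `g`, then the `τ`-closure of the subgroup `H = Σ × {0}` equals
`Σ × {n ∈ ℤ | n ≤ 0}`; in particular this closure is not a subgroup of `G`. -/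
theorem closure_of_sigma_times_zero
    (ι : Type u) (hι : Cardinal.mk ι = Cardinal.aleph 1)
    (c : ι → Circle) (hc : ¬ IsOfFinOrder c)
    (hcSigma : Subgroup.zpowers c ⊓ SigmaSubgroup ι = ⊥)
    (τ : TopologicalSpace (↥(SigmaSubgroup ι) × Multiplicative ℤ))
    (hmul : @ContinuousMul _ τ _)
    (hbasis : ∀ g : ↥(SigmaSubgroup ι) × Multiplicative ℤ,
      (@nhds _ τ g).HasBasis
        (fun U : Set (ι → Circle) => IsOpen U ∧ (1 : ι → Circle) ∈ U)
        (fun U : Set (ι → Circle) => (fun p => g * p) '' OSet c U)) :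
    @closure _ τ {p : ↥(SigmaSubgroup ι) × Multiplicative ℤ | p.2 = 1} =
        {p : ↥(SigmaSubgroup ι) × Multiplicative ℤ | Multiplicative.toAdd p.2 ≤ 0} ∧
      ¬ ∃ K : Subgroup (↥(SigmaSubgroup ι) × Multiplicative ℤ),
        (K : Set (↥(SigmaSubgroup ι) × Multiplicative ℤ)) =
          @closure _ τ {p : ↥(SigmaSubgroup ι) × Multiplicative ℤ | p.2 = 1} :=
  closure_of_sigma_times_zero_general ι c τ hbasis
end

section
/- Let ι be an index set of cardinality ℵ₁, let Σ be the subgroup of countably supported elements of 𝕋^ι, and let c ∈ 𝕋^ι be an element of infinite order such that the cyclic subgroup generated by c meets Σ only in the identity. Suppose τ is a topology on G = Σ × ℤ making multiplication jointly continuous such that for every g ∈ G the translates g·O_U, for U an open neighborhood of the identity in 𝕋^ι, form a neighborhood basis at g. Then the subspace topology induced by τ on the subgroup H = Σ × {0} coincides with the topology Σ inherits from the product 𝕋^ι; hence the map x ↦ (x, 0) is an isomorphism of topological groups from Σ onto H, and H with the subspace topology is a topological group. -/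
/-- The subgroup `H = Σ × {0}` of `G = Σ × ℤ`. -/
noncomputable def HSubgroup (ι : Type*) :
    Subgroup (↥(SigmaSubgroup ι) × Multiplicative ℤ) :=
  (⊤ : Subgroup ↥(SigmaSubgroup ι)).prod (⊥ : Subgroup (Multiplicative ℤ))

/-!
Only the layer `n = 0` of `O_U` meets `Σ × {0}`, so the basic neighbourhoods `(x, 0) · O_U`
cut out the sets `(x · U ∩ Σ) × {0}` there: exactly the basic neighbourhoods of `x` in `Σ`.
Hence `x ↦ (x, 0)` is a homomorphism and a topological embedding, and its image `H` inherits
the topological group structure of `Σ`.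
-/

open Topology Filter

section GroupEmbedding

variable {G X : Type*} [Group G] [TopologicalSpace G] [Group X] [TopologicalSpace X]

theorem MonoidHom.isInducing_of_hasBasis_nhds_mul_image [ContinuousMul G] {κ : Sort*}
    (f : G →* X) {p : κ → Prop} {s : κ → Set X}
    (hX : ∀ x, (𝓝 (f x)).HasBasis p (fun i => (f x * ·) '' s i))
    (hG : (𝓝 (1 : G)).HasBasis p (fun i => f ⁻¹' s i)) : IsInducing f := by
  refine isInducing_iff_nhds.2 fun x => ?_
  have hcomap : (comap f (𝓝 (f x))).HasBasis p (fun i => (x * ·) '' (f ⁻¹' s i)) := by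
    refine ((hX x).comap f).congr (fun _ => Iff.rfl) fun i _ => ?_
    simp only [Set.image_mul_left, Set.preimage_preimage, map_mul, map_inv]
  have hx : map (x * ·) (𝓝 1) = 𝓝 x := by simpa using (Homeomorph.mulLeft x).map_nhds_eq 1
  rw [← hx]
  exact (hG.map _).eq_of_same_basis hcomap

theorem Topology.IsEmbedding.isTopologicalGroup_range [IsTopologicalGroup G] {f : G →* X}
    (hf : IsEmbedding f) :
    IsTopologicalGroup f.range := by
  let e := MonoidHom.ofInjective hf.injective
  refine IsInducing.topologicalGroup e.symm ?_
  have hval : f ∘ e.symm = Subtype.val := funext fun y =>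
    (MonoidHom.ofInjective_apply hf.injective).symm.trans
      (congrArg Subtype.val (e.apply_symm_apply y))
  rw [← hf.isInducing.of_comp_iff, hval]
  exact IsInducing.subtypeVal

end GroupEmbedding

theorem MonoidHom.range_inl (G N : Type*) [Group G] [Group N] :
    (MonoidHom.inl G N).range = (⊤ : Subgroup G).prod ⊥ := by
  ext ⟨a, b⟩
  simp [Subgroup.mem_prod, eq_comm]

theorem preimage_inl_OSet {ι : Type*} (c : ι → Circle) (U : Set (ι → Circle)) :
    MonoidHom.inl _ _ ⁻¹' OSet c U = Subtype.val ⁻¹' U := by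
  ext x
  simp only [OSet, Set.mem_preimage, Set.mem_ofPred_eq, MonoidHom.inl_apply]
  constructor
  · rintro ⟨n, hn, u, hu, hx⟩
    obtain rfl : n = 0 := by simpa using (ofAdd_eq_one.1 hn.symm)
    simpa [hx] using hu
  · exact fun hx => ⟨0, rfl, x, hx, by simp⟩

theorem sigma_times_zero_is_topological_subgroup_general
    (ι : Type u)
    (c : ι → Circle)
    (τ : TopologicalSpace (↥(SigmaSubgroup ι) × Multiplicative ℤ))
    (hbasis : ∀ g : ↥(SigmaSubgroup ι) × Multiplicative ℤ,
      (@nhds _ τ g).HasBasis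
        (fun U : Set (ι → Circle) => IsOpen U ∧ (1 : ι → Circle) ∈ U)
        (fun U : Set (ι → Circle) => (fun p => g * p) '' OSet c U)) :
    (∀ x y : ↥(SigmaSubgroup ι),
        ((x * y, 1) : ↥(SigmaSubgroup ι) × Multiplicative ℤ) = (x, 1) * (y, 1)) ∧
      Set.range (fun x : ↥(SigmaSubgroup ι) =>
        ((x, 1) : ↥(SigmaSubgroup ι) × Multiplicative ℤ)) = (HSubgroup ι : Set _) ∧
      @Topology.IsEmbedding _ _ _ τ (fun x : ↥(SigmaSubgroup ι) =>
        ((x, 1) : ↥(SigmaSubgroup ι) × Multiplicative ℤ)) ∧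
      @IsTopologicalGroup ↥(HSubgroup ι)
        (TopologicalSpace.induced (Subtype.val : ↥(HSubgroup ι) → _) τ) _ := by
  let _ := τ
  have hinl : IsEmbedding (MonoidHom.inl (SigmaSubgroup ι) (Multiplicative ℤ)) := by
    refine ⟨MonoidHom.isInducing_of_hasBasis_nhds_mul_image _ (fun x => hbasis (x, 1)) ?_,
      fun x y h => congrArg Prod.fst h⟩
    simp only [preimage_inl_OSet]
    rw [nhds_subtype, OneMemClass.coe_one]
    exact ((nhds_basis_opens 1).congr (fun _ => and_comm) fun _ _ => rfl).comap _
  refine ⟨fun x y => rfl, ?_, hinl, ?_⟩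
  · rw [HSubgroup, ← MonoidHom.range_inl, MonoidHom.coe_range]
    rfl
  · rw [HSubgroup, ← MonoidHom.range_inl]
    exact hinl.isTopologicalGroup_range

/-- Let `ι` have cardinality `ℵ₁`, let `Σ ≤ 𝕋^ι` be the subgroup of countably supported
elements and let `c ∈ 𝕋^ι` have infinite order with `⟨c⟩ ∩ Σ = {1}`.  If `τ` is a topology
on `G = Σ × ℤ` making multiplication jointly continuous such that for every `g ∈ G` the
translates `g · O_U`, with `U` an open neighborhood of the identity of `𝕋^ι`, form a
neighborhood basis at `g`, then the subspace topology induced by `τ` on `H = Σ × {0}`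
coincides with the topology `Σ` inherits from `𝕋^ι`: the map `x ↦ (x, 0)` is a group
homomorphism of `Σ` onto `H` which is a topological embedding, and `H` with the subspace
topology is a topological group. -/
theorem sigma_times_zero_is_topological_subgroup
    (ι : Type u) (hι : Cardinal.mk ι = Cardinal.aleph 1)
    (c : ι → Circle) (hc : ¬ IsOfFinOrder c)
    (hcSigma : Subgroup.zpowers c ⊓ SigmaSubgroup ι = ⊥)
    (τ : TopologicalSpace (↥(SigmaSubgroup ι) × Multiplicative ℤ))
    (hmul : @ContinuousMul _ τ _)
    (hbasis : ∀ g : ↥(SigmaSubgroup ι) × Multiplicative ℤ,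
      (@nhds _ τ g).HasBasis
        (fun U : Set (ι → Circle) => IsOpen U ∧ (1 : ι → Circle) ∈ U)
        (fun U : Set (ι → Circle) => (fun p => g * p) '' OSet c U)) :
    (∀ x y : ↥(SigmaSubgroup ι),
        ((x * y, 1) : ↥(SigmaSubgroup ι) × Multiplicative ℤ) = (x, 1) * (y, 1)) ∧
      Set.range (fun x : ↥(SigmaSubgroup ι) =>
        ((x, 1) : ↥(SigmaSubgroup ι) × Multiplicative ℤ)) = (HSubgroup ι : Set _) ∧
      @Topology.IsEmbedding _ _ _ τ (fun x : ↥(SigmaSubgroup ι) =>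
        ((x, 1) : ↥(SigmaSubgroup ι) × Multiplicative ℤ)) ∧
      @IsTopologicalGroup ↥(HSubgroup ι)
        (TopologicalSpace.induced (Subtype.val : ↥(HSubgroup ι) → _) τ) _ :=
  sigma_times_zero_is_topological_subgroup_general ι c τ hbasis
end

section
/- Let ι be an index set of cardinality ℵ₁, let Σ be the subgroup of countably supported elements of 𝕋^ι, and let c ∈ 𝕋^ι be an element of infinite order such that the cyclic subgroup generated by c meets Σ only in the identity. Suppose τ is a topology on G = Σ × ℤ making multiplication jointly continuous such that for every g ∈ G the translates g·O_U, for U an open neighborhood of the identity in 𝕋^ι, form a neighborhood basis at g. Then the group coreflection topology τ^♯ (the smallest topology containing τ and the inverses of all τ-open sets) equals the product topology on Σ × ℤ, where Σ carries the subspace topology from 𝕋^ι and ℤ is discrete. -/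
open Filter Set Topology

section CoreflectionBasis

variable {G : Type*} [CommGroup G] {κ : Type*} {p : κ → Prop} {s : κ → Set G}

lemma image_mul_left_inter_preimage_inv (g : G) (A B : Set G) :
    (g * ·) '' A ∩ (·⁻¹) ⁻¹' ((g⁻¹ * ·) '' B) = (g * ·) '' (A ∩ B⁻¹) := by
  ext x
  simp only [image_mul_left, mem_inter_iff, mem_preimage, Set.mem_inv, inv_inv, mul_inv]

lemma nhds_inf_induced_inv_hasBasis (τ : TopologicalSpace G)
    (hτ : ∀ g, (@nhds G τ g).HasBasis p fun i => (g * ·) '' s i) (g : G) :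
    (@nhds G (τ ⊓ TopologicalSpace.induced (·⁻¹) τ) g).HasBasis
      (fun ij : κ × κ => p ij.1 ∧ p ij.2) fun ij => (g * ·) '' (s ij.1 ∩ (s ij.2)⁻¹) := by
  rw [nhds_inf, nhds_induced]
  convert (hτ g).inf ((hτ g⁻¹).comap (·⁻¹)) using 2 with ij
  exact (image_mul_left_inter_preimage_inv g _ _).symm

end CoreflectionBasis

lemma nhds_prod_discrete_hasBasis {H D : Type*} [Group H] [TopologicalSpace H]
    [IsTopologicalGroup H] [Group D] [TopologicalSpace D] [DiscreteTopology D]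
    {κ : Type*} {p : κ → Prop} {s : κ → Set H} (h : (𝓝 (1 : H)).HasBasis p s) (g : H × D) :
    (𝓝 g).HasBasis p fun i => (g * ·) '' (s i ×ˢ {1}) := by
  rw [← Prod.mk.eta (p := g), nhds_prod_eq, nhds_discrete D, prod_pure,
    ← map_mul_left_nhds_one, map_map]
  convert h.map _ using 2 with i
  ext ⟨x, d⟩
  simp only [image_mul_left, mem_preimage, Prod.fst_mul, Prod.snd_mul, Prod.fst_inv,
    Prod.snd_inv, mem_prod, mem_singleton_iff, inv_mul_eq_one, mem_image, Function.comp_apply,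
    Prod.mk.injEq]
  constructor
  · rintro ⟨hx, rfl⟩
    exact ⟨_, hx, mul_inv_cancel_left _ _, rfl⟩
  · rintro ⟨y, hy, rfl, rfl⟩
    simpa using hy

section OSet

variable {ι : Type*} {c : ι → Circle} {U V : Set (ι → Circle)}
  {p : ↥(SigmaSubgroup ι) × Multiplicative ℤ}

lemma mem_OSet_iff_of_snd_eq_one (hp : p.2 = 1) : p ∈ OSet c U ↔ (p.1 : ι → Circle) ∈ U := by
  constructor
  · rintro ⟨n, hn, u, hu, hpu⟩
    obtain rfl : n = 0 := by simpa [hp, eq_comm] using congrArg Multiplicative.toAdd hn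
    simpa [hpu] using hu
  · exact fun h => ⟨0, by simpa using hp, _, h, by simp⟩

lemma snd_eq_one_of_mem_OSet_of_inv_mem (hp : p ∈ OSet c U) (hp' : p⁻¹ ∈ OSet c V) :
    p.2 = 1 := by
  obtain ⟨n, hn, -⟩ := hp
  obtain ⟨m, hm, -⟩ := hp'
  have : -(n : ℤ) = m := by simpa [hn] using congrArg Multiplicative.toAdd hm
  obtain rfl : n = 0 := by omega
  simpa using hn

lemma OSet_inter_inv_OSet :
    OSet c U ∩ (OSet c V)⁻¹ = (Subtype.val ⁻¹' (U ∩ V⁻¹)) ×ˢ {1} := by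
  ext p
  simp only [mem_inter_iff, Set.mem_inv, mem_prod, mem_preimage, mem_singleton_iff]
  refine ⟨fun h => ?_, fun ⟨hpU, hp⟩ => ?_⟩
  · have hp := snd_eq_one_of_mem_OSet_of_inv_mem h.1 h.2
    have hp' : p⁻¹.2 = 1 := by simp [hp]
    exact ⟨⟨(mem_OSet_iff_of_snd_eq_one hp).1 h.1, by
      simpa using (mem_OSet_iff_of_snd_eq_one hp').1 h.2⟩, hp⟩
  · have hp' : p⁻¹.2 = 1 := by simp [hp]
    exact ⟨(mem_OSet_iff_of_snd_eq_one hp).2 hpU.1,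
      (mem_OSet_iff_of_snd_eq_one hp').2 (by simpa using hpU.2)⟩

end OSet

theorem group_coreflection_of_sigma_times_int_is_product_general
    (ι : Type u)
    (c : ι → Circle)
    (τ : TopologicalSpace (↥(SigmaSubgroup ι) × Multiplicative ℤ))
    (hbasis : ∀ g : ↥(SigmaSubgroup ι) × Multiplicative ℤ,
      (@nhds _ τ g).HasBasis
        (fun U : Set (ι → Circle) => IsOpen U ∧ (1 : ι → Circle) ∈ U)
        (fun U : Set (ι → Circle) => (fun p => g * p) '' OSet c U)) :
    τ ⊓ TopologicalSpace.induced
        (fun p : ↥(SigmaSubgroup ι) × Multiplicative ℤ => p⁻¹) τ =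
      TopologicalSpace.induced
          (Prod.fst : ↥(SigmaSubgroup ι) × Multiplicative ℤ → ↥(SigmaSubgroup ι))
          inferInstance ⊓
        TopologicalSpace.induced
          (Prod.snd : ↥(SigmaSubgroup ι) × Multiplicative ℤ → Multiplicative ℤ)
          (⊥ : TopologicalSpace (Multiplicative ℤ)) := by
  -- the statement uses `⊥`, which is only propositionally equal to the instance on `ℤ`
  let _ : TopologicalSpace (Multiplicative ℤ) := ⊥
  have : DiscreteTopology (Multiplicative ℤ) := ⟨rfl⟩
  have hone : (𝓝 (1 : SigmaSubgroup ι)).HasBasis (fun U => IsOpen U ∧ (1 : ι → Circle) ∈ U)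
      (Subtype.val ⁻¹' ·) := by
    rw [nhds_induced, OneMemClass.coe_one]
    simpa only [and_comm] using (nhds_basis_opens (1 : ι → Circle)).comap Subtype.val
  refine TopologicalSpace.ext_nhds fun g => (nhds_inf_induced_inv_hasBasis τ hbasis g).ext
    (nhds_prod_discrete_hasBasis hone g) ?_ ?_
  · rintro ⟨U, V⟩ ⟨⟨hU, hU1⟩, hV, hV1⟩
    exact ⟨U ∩ V⁻¹, ⟨hU.inter hV.inv, hU1, by simpa using hV1⟩, by rw [OSet_inter_inv_OSet]⟩
  · rintro W ⟨hW, hW1⟩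
    refine ⟨(W, W⁻¹), ⟨⟨hW, hW1⟩, hW.inv, by simpa using hW1⟩, ?_⟩
    rw [OSet_inter_inv_OSet, inv_inv, inter_self]

/-- Let `ι` have cardinality `ℵ₁`, let `Σ ≤ 𝕋^ι` be the subgroup of countably supported
elements and let `c ∈ 𝕋^ι` have infinite order with `⟨c⟩ ∩ Σ = {1}`.  If `τ` is a topology
on `G = Σ × ℤ` making multiplication jointly continuous such that for every `g ∈ G` the
translates `g · O_U`, with `U` an open neighborhood of the identity of `𝕋^ι`, form a
neighborhood basis at `g`, then the group coreflection topology `τ♯` (the smallest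
topology containing `τ` and the inverses of all `τ`-open sets, i.e. `τ ⊓ induced (·⁻¹) τ`
in Mathlib's order on topologies) equals the product topology on `Σ × ℤ`, where `Σ`
carries the subspace topology from `𝕋^ι` and `ℤ` is discrete. -/
theorem group_coreflection_of_sigma_times_int_is_product
    (ι : Type u) (hι : Cardinal.mk ι = Cardinal.aleph 1)
    (c : ι → Circle) (hc : ¬ IsOfFinOrder c)
    (hcSigma : Subgroup.zpowers c ⊓ SigmaSubgroup ι = ⊥)
    (τ : TopologicalSpace (↥(SigmaSubgroup ι) × Multiplicative ℤ))
    (hmul : @ContinuousMul _ τ _)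
    (hbasis : ∀ g : ↥(SigmaSubgroup ι) × Multiplicative ℤ,
      (@nhds _ τ g).HasBasis
        (fun U : Set (ι → Circle) => IsOpen U ∧ (1 : ι → Circle) ∈ U)
        (fun U : Set (ι → Circle) => (fun p => g * p) '' OSet c U)) :
    τ ⊓ TopologicalSpace.induced
        (fun p : ↥(SigmaSubgroup ι) × Multiplicative ℤ => p⁻¹) τ =
      TopologicalSpace.induced
          (Prod.fst : ↥(SigmaSubgroup ι) × Multiplicative ℤ → ↥(SigmaSubgroup ι))
          inferInstance ⊓
        TopologicalSpace.induced
          (Prod.snd : ↥(SigmaSubgroup ι) × Multiplicative ℤ → Multiplicative ℤ)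
          (⊥ : TopologicalSpace (Multiplicative ℤ)) :=
  group_coreflection_of_sigma_times_int_is_product_general ι c τ hbasis
end

section
/- Let ι be an index set of cardinality ℵ₁ and let Σ be the subgroup of countably supported elements of 𝕋^ι, endowed with the subspace topology of the product topology. Then Σ is sequentially compact: every sequence of elements of Σ has a subsequence converging in Σ. -/
open Filter Topology

theorem exists_tendsto_subseq_of_eq_off_countable {ι X : Type*} [TopologicalSpace X]
    [CompactSpace X] [FirstCountableTopology X] {S : Set ι} (hS : S.Countable) (c : X)
    (x : ℕ → ι → X) (hx : ∀ n, ∀ i ∉ S, x n i = c) :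
    ∃ a : ι → X, (∀ i ∉ S, a i = c) ∧
      ∃ φ : ℕ → ℕ, StrictMono φ ∧ Tendsto (x ∘ φ) atTop (𝓝 a) := by
  classical
  have := hS.to_subtype
  let extend : (S → X) → ι → X := fun b i => if h : i ∈ S then b ⟨i, h⟩ else c
  have h_extend : Continuous extend := continuous_pi fun i => by
    by_cases h : i ∈ S
    · simpa [extend, h] using continuous_apply (⟨i, h⟩ : S)
    · simp only [extend, h, dite_false]
      exact continuous_const
  have hx_extend : ∀ n, extend (fun i : S => x n i) = x n := fun n => funext fun i => by
    by_cases h : i ∈ S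
    · simp [extend, h]
    · simp [extend, h, hx n i h]
  obtain ⟨b, φ, hφ, hb⟩ := CompactSpace.tendsto_subseq fun n (i : S) => x n i
  refine ⟨extend b, fun i hi => dif_neg hi, φ, hφ, ?_⟩
  simpa [Function.comp_def, hx_extend] using (h_extend.tendsto b).comp hb

theorem sigmaSubgroup_seq_compact_general
    (ι : Type u)
    (x : ℕ → ↥(SigmaSubgroup ι)) :
    ∃ (a : ↥(SigmaSubgroup ι)) (φ : ℕ → ℕ), StrictMono φ ∧
      Filter.Tendsto (x ∘ φ) Filter.atTop (nhds a) := by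
  set S : Set ι := ⋃ n, {i | (x n : ι → Circle) i ≠ 1}
  have hS : S.Countable := Set.countable_iUnion fun n => (x n).2
  obtain ⟨a, ha, φ, hφ, hlim⟩ := exists_tendsto_subseq_of_eq_off_countable hS 1
    (fun n => (x n : ι → Circle)) fun n i hi => by_contra fun h => hi (Set.mem_iUnion.2 ⟨n, h⟩)
  have ha_mem : a ∈ SigmaSubgroup ι := hS.mono fun i hi => by_contra fun h => hi (ha i h)
  exact ⟨⟨a, ha_mem⟩, φ, hφ, tendsto_subtype_rng.2 hlim⟩

/-- Let `ι` have cardinality `ℵ₁` and let `Σ` be the subgroup of countably supported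
elements of `𝕋^ι`, with the subspace topology of the product topology.  Then `Σ` is
sequentially compact: every sequence in `Σ` has a subsequence converging in `Σ`. -/
theorem sigmaSubgroup_seq_compact
    (ι : Type u) (hι : Cardinal.mk ι = Cardinal.aleph 1)
    (x : ℕ → ↥(SigmaSubgroup ι)) :
    ∃ (a : ↥(SigmaSubgroup ι)) (φ : ℕ → ℕ), StrictMono φ ∧
      Filter.Tendsto (x ∘ φ) Filter.atTop (nhds a) :=
  sigmaSubgroup_seq_compact_general ι x
end

section
/- The group coreflection of the Sorgenfrey line is the discrete group of the reals: if τ denotes the Sorgenfrey (lower limit) topology on the additive group ℝ, then the smallest topology containing τ together with the sets −U = {−x : x ∈ U} for all τ-open sets U is the discrete topology on ℝ. -/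
/-!
Every point `x` has the Sorgenfrey neighbourhood `[x, x + 1) ⊆ [x, ∞)`, and pulling the
neighbourhood `[-x, ∞)` of `-x` back along negation gives `(-∞, x]`. In the coreflection both
are neighbourhoods of `x`, and their intersection is `{x}`.
-/

open Set Filter TopologicalSpace

theorem Ici_mem_nhds_generateFrom_Ico {α : Type*} [Preorder α] [NoMaxOrder α] (x : α) :
    Ici x ∈ @nhds α (generateFrom {s : Set α | ∃ a b : α, a < b ∧ s = Ico a b}) x := by
  obtain ⟨b, hxb⟩ := exists_gt x
  rw [nhds_generateFrom]
  exact mem_iInf_of_mem (Ico x b) <| mem_iInf_of_mem ⟨left_mem_Ico.2 hxb, x, b, hxb, rfl⟩ <|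
    mem_principal.2 Ico_subset_Ici_self

theorem inf_induced_neg_eq_bot_of_Ici_mem_nhds {G : Type*} [AddCommGroup G] [PartialOrder G]
    [IsOrderedAddMonoid G] (t : TopologicalSpace G) (hIci : ∀ x : G, Ici x ∈ @nhds G t x) :
    t ⊓ induced (fun x : G => -x) t = ⊥ := by
  refine (@discreteTopology_iff_singleton_mem_nhds G (t ⊓ induced (fun x : G => -x) t)).2
    (fun x => ?_) |>.eq_bot
  have hsingleton : Ici x ∩ (fun y : G => -y) ⁻¹' Ici (-x) = {x} := by
    ext y
    simp only [mem_inter_iff, mem_Ici, mem_preimage, neg_le_neg_iff, mem_singleton_iff]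
    exact ⟨fun h => le_antisymm h.2 h.1, fun h => ⟨h.ge, h.le⟩⟩
  rw [nhds_inf, nhds_induced, ← hsingleton]
  exact inter_mem_inf (hIci x) (preimage_mem_comap (hIci (-x)))

/-- The group coreflection of the Sorgenfrey line is the discrete group of reals: if `τ` is
the Sorgenfrey (lower limit) topology on `ℝ`, generated by the half-open intervals
`[a, b)` with `a < b`, then the smallest topology containing `τ` together with the sets
`-U` for all `τ`-open `U` (i.e. the topology generated by the union of `τ` and the
pullback of `τ` under negation, which in Mathlib's order on topologies is the infimum
`τ ⊓ induced (-·) τ`) is the discrete topology (`⊥` in Mathlib's order) on `ℝ`. -/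
theorem sorgenfrey_group_coreflection_discrete
    (τ : TopologicalSpace ℝ)
    (hτ : τ = TopologicalSpace.generateFrom
      {s : Set ℝ | ∃ a b : ℝ, a < b ∧ s = Set.Ico a b}) :
    τ ⊓ TopologicalSpace.induced (fun x : ℝ => -x) τ = ⊥ := by
  subst hτ
  exact inf_induced_neg_eq_bot_of_Ici_mem_nhds _ Ici_mem_nhds_generateFrom_Ico
end
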